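/- arXiv:1811.03429 — 8 statements merged into one kernel-verified Lean document; each statement's English description precedes it below -/
import Mathlib

section
/- With x, y, z, θ as in the standard arc-length horizontal curve setup from the origin, the identity θ̇(t)·z⃛(t) = θ̈(t)·z̈(t) - θ̇(t)³·ż(t) + θ̇(t)²/2 holds for all t. -/
open Filter

/-- For the standard arc-length horizontal curve setup from the origin
(ẋ = cos θ, ẏ = sin θ, ż = (xẏ - yẋ)/2, x(0)=y(0)=z(0)=0, θ smooth),
the identity θ̇ z⃛ = θ̈ z̈ - θ̇³ ż + θ̇²/2 holds for all t. -/
theorem z_ode (θ x y z : ℝ → ℝ)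
    (hθ : ContDiff ℝ (⊤ : ℕ∞) θ) (hxs : ContDiff ℝ (⊤ : ℕ∞) x) (hys : ContDiff ℝ (⊤ : ℕ∞) y)
    (hzs : ContDiff ℝ (⊤ : ℕ∞) z)
    (hx' : ∀ t, deriv x t = Real.cos (θ t))
    (hy' : ∀ t, deriv y t = Real.sin (θ t))
    (hz' : ∀ t, deriv z t = (x t * deriv y t - y t * deriv x t) / 2)
    (hx0 : x 0 = 0) (hy0 : y 0 = 0) (hz0 : z 0 = 0) :
    ∀ t, deriv θ t * iteratedDeriv 3 z t =
      iteratedDeriv 2 θ t * iteratedDeriv 2 z t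
        - (deriv θ t)^3 * deriv z t + (deriv θ t)^2 / 2 := by
  have hθd : Differentiable ℝ θ := hθ.differentiable (by simp)
  have hxd : Differentiable ℝ x := hxs.differentiable (by simp)
  have hyd : Differentiable ℝ y := hys.differentiable (by simp)
  set u : ℝ → ℝ := fun t => (x t * Real.sin (θ t) - y t * Real.cos (θ t)) / 2 with hu_def
  set v : ℝ → ℝ := fun t =>
    deriv θ t * (x t * Real.cos (θ t) + y t * Real.sin (θ t)) / 2 with hv_def
  have hdz : deriv z = u := funext fun t => by rw [hz' t, hx' t, hy' t]
  have hθt : ∀ t, HasDerivAt θ (deriv θ t) t := fun t => (hθd t).hasDerivAt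
  have hxt : ∀ t, HasDerivAt x (Real.cos (θ t)) t := fun t => hx' t ▸ (hxd t).hasDerivAt
  have hyt : ∀ t, HasDerivAt y (Real.sin (θ t)) t := fun t => hy' t ▸ (hyd t).hasDerivAt
  have hsin : ∀ t, HasDerivAt (fun s => Real.sin (θ s)) (Real.cos (θ t) * deriv θ t) t :=
    fun t => (Real.hasDerivAt_sin (θ t)).comp t (hθt t)
  have hcos : ∀ t, HasDerivAt (fun s => Real.cos (θ s)) (-Real.sin (θ t) * deriv θ t) t :=
    fun t => (Real.hasDerivAt_cos (θ t)).comp t (hθt t)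
  have hu : ∀ t, HasDerivAt u (v t) t := by
    intro t
    have h := (((hxt t).mul (hsin t)).sub ((hyt t).mul (hcos t))).div_const 2
    refine h.congr_deriv (Eq.symm ?_)
    simp only [hv_def]
    ring
  have hdu : deriv u = v := funext fun t => (hu t).deriv
  have hθ'd : Differentiable ℝ (deriv θ) := by
    have h1 : ContDiff ℝ (⊤:ℕ∞) θ := hθ.of_le (by simp)
    exact ((contDiff_infty_iff_deriv.mp h1).2).differentiable (by simp)
  have hθ't : ∀ t, HasDerivAt (deriv θ) (deriv (deriv θ) t) t := fun t => (hθ'd t).hasDerivAt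
  have hv : ∀ t, HasDerivAt v
      (deriv (deriv θ) t * (x t * Real.cos (θ t) + y t * Real.sin (θ t)) / 2
        + deriv θ t * (1 - 2 * deriv θ t * u t) / 2) t := by
    intro t
    have h := ((hθ't t).mul (((hxt t).mul (hcos t)).add ((hyt t).mul (hsin t)))).div_const 2
    refine h.congr_deriv (Eq.symm ?_)
    simp only [hu_def, Pi.add_apply, Pi.mul_apply]
    have hpy := Real.sin_sq_add_cos_sq (θ t)
    linear_combination (-(deriv θ t)/2) * hpy
  intro t
  have h2z : iteratedDeriv 2 z t = v t := by
    rw [iteratedDeriv_succ, iteratedDeriv_one, hdz, hdu]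
  have h3z : iteratedDeriv 3 z t = deriv v t := by
    rw [iteratedDeriv_succ, iteratedDeriv_succ, iteratedDeriv_one, hdz, hdu]
  have h2θ : iteratedDeriv 2 θ t = deriv (deriv θ) t := by
    rw [iteratedDeriv_succ, iteratedDeriv_one]
  rw [h2z, h3z, h2θ, (hv t).deriv, hdz]
  simp only [hu_def, hv_def]
  ring
end

section
/- With x, y, z, θ as in the standard arc-length horizontal curve setup from the origin, suppose θ̇(t) ≠ 0 for all t in an interval (0,ε). Then for t ∈ (0,ε): z̈(t)/θ̇(t) = ∫₀ᵗ (-θ̇(s)ż(s) + 1/2) ds. -/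
open Filter

/-- For the standard arc-length horizontal curve setup from the origin, if θ̇ is
nonvanishing on (0,ε), then for t ∈ (0,ε), z̈(t)/θ̇(t) = ∫₀ᵗ (-θ̇ż + 1/2). -/
theorem ddz_div_dtheta (θ x y z : ℝ → ℝ) (ε : ℝ) (hε : 0 < ε)
    (hθ : ContDiff ℝ (⊤ : ℕ∞) θ) (hxs : ContDiff ℝ (⊤ : ℕ∞) x) (hys : ContDiff ℝ (⊤ : ℕ∞) y)
    (hzs : ContDiff ℝ (⊤ : ℕ∞) z)
    (hx' : ∀ t, deriv x t = Real.cos (θ t))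
    (hy' : ∀ t, deriv y t = Real.sin (θ t))
    (hz' : ∀ t, deriv z t = (x t * deriv y t - y t * deriv x t) / 2)
    (hx0 : x 0 = 0) (hy0 : y 0 = 0) (hz0 : z 0 = 0)
    (hθ' : ∀ t ∈ Set.Ioo 0 ε, deriv θ t ≠ 0) :
    ∀ t ∈ Set.Ioo 0 ε, iteratedDeriv 2 z t / deriv θ t =
      ∫ s in (0:ℝ)..t, (-(deriv θ s * deriv z s) + 1/2) := by
  intro t ht
  -- basic derivative facts
  have hxd : ∀ s, HasDerivAt x (Real.cos (θ s)) s := fun s => by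
    have := (hxs.differentiable (by simp) s).hasDerivAt
    rwa [hx' s] at this
  have hyd : ∀ s, HasDerivAt y (Real.sin (θ s)) s := fun s => by
    have := (hys.differentiable (by simp) s).hasDerivAt
    rwa [hy' s] at this
  have hθd : ∀ s, HasDerivAt θ (deriv θ s) s := fun s =>
    (hθ.differentiable (by simp) s).hasDerivAt
  -- explicit formula for deriv z
  have hzfun : ∀ s, deriv z s = (x s * Real.sin (θ s) - y s * Real.cos (θ s)) / 2 := by
    intro s; rw [hz' s, hx' s, hy' s]
  -- F and its derivative
  set F : ℝ → ℝ := fun s => (x s * Real.cos (θ s) + y s * Real.sin (θ s)) / 2 with hF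
  have hFd : ∀ s, HasDerivAt F (-(deriv θ s * deriv z s) + 1/2) s := by
    intro s
    have h1 : HasDerivAt (fun u => Real.cos (θ u)) (-Real.sin (θ s) * deriv θ s) s :=
      (Real.hasDerivAt_cos (θ s)).comp s (hθd s)
    have h2 : HasDerivAt (fun u => Real.sin (θ u)) (Real.cos (θ s) * deriv θ s) s :=
      (Real.hasDerivAt_sin (θ s)).comp s (hθd s)
    have h3 := (((hxd s).mul h1).add ((hyd s).mul h2)).div_const 2
    refine h3.congr_deriv ?_
    rw [hzfun s]
    have hpyth := Real.sin_sq_add_cos_sq (θ s)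
    ring_nf
    nlinarith [hpyth]
  -- second derivative of z
  have hzdd : HasDerivAt (deriv z) (deriv θ t * (x t * Real.cos (θ t) + y t * Real.sin (θ t)) / 2) t := by
    have h1 : HasDerivAt (fun u => Real.cos (θ u)) (-Real.sin (θ t) * deriv θ t) t :=
      (Real.hasDerivAt_cos (θ t)).comp t (hθd t)
    have h2 : HasDerivAt (fun u => Real.sin (θ u)) (Real.cos (θ t) * deriv θ t) t :=
      (Real.hasDerivAt_sin (θ t)).comp t (hθd t)
    have h3 := (((hxd t).mul h2).sub ((hyd t).mul h1)).div_const 2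
    have heq : (deriv z) = fun s => (x s * Real.sin (θ s) - y s * Real.cos (θ s)) / 2 :=
      funext hzfun
    rw [heq]
    refine h3.congr_deriv ?_
    ring
  have hiter : iteratedDeriv 2 z t = deriv θ t * (x t * Real.cos (θ t) + y t * Real.sin (θ t)) / 2 := by
    rw [show (2:ℕ) = 1 + 1 from rfl, iteratedDeriv_succ, iteratedDeriv_one]
    exact hzdd.deriv
  -- integral
  have hcont : Continuous fun s => -(deriv θ s * deriv z s) + 1/2 := by
    have hcθ : Continuous (deriv θ) := hθ.continuous_deriv (by simp)
    have hcz : Continuous (deriv z) := hzs.continuous_deriv (by simp)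
    fun_prop
  have hint : (∫ s in (0:ℝ)..t, (-(deriv θ s * deriv z s) + 1/2)) = F t - F 0 :=
    intervalIntegral.integral_eq_sub_of_hasDerivAt (fun s _ => hFd s)
      (hcont.intervalIntegrable 0 t)
  have hF0 : F 0 = 0 := by simp [hF, hx0, hy0]
  rw [hint, hF0, hiter, sub_zero, hF]
  field_simp [hθ' t ht]
end

section
/- With x, y, z, θ as in the standard arc-length horizontal curve setup from the origin (assuming θ̇ nonvanishing near 0⁺ or all derivatives of θ vanish at 0), the third, fourth and fifth derivatives of z at 0 are: z⃛(0) = θ̇(0)/2, z⁽⁴⁾(0) = θ̈(0), z⁽⁵⁾(0) = (3/2)θ⃛(0) - (1/2)θ̇(0)³. -/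
open Filter

/-- For the standard arc-length horizontal curve setup from the origin (with θ̇
nonvanishing near 0⁺, or all derivatives of θ vanishing at 0), one has
z⃛(0) = θ̇(0)/2, z⁽⁴⁾(0) = θ̈(0), z⁽⁵⁾(0) = (3/2)θ⃛(0) - (1/2)θ̇(0)³. -/
theorem z_derivs_at_zero (θ x y z : ℝ → ℝ)
    (hθ : ContDiff ℝ (⊤ : ℕ∞) θ) (hxs : ContDiff ℝ (⊤ : ℕ∞) x) (hys : ContDiff ℝ (⊤ : ℕ∞) y)
    (hzs : ContDiff ℝ (⊤ : ℕ∞) z)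
    (hx' : ∀ t, deriv x t = Real.cos (θ t))
    (hy' : ∀ t, deriv y t = Real.sin (θ t))
    (hz' : ∀ t, deriv z t = (x t * deriv y t - y t * deriv x t) / 2)
    (hx0 : x 0 = 0) (hy0 : y 0 = 0) (hz0 : z 0 = 0)
    (hcase : (∃ ε > 0, ∀ t ∈ Set.Ioo (0:ℝ) ε, deriv θ t ≠ 0) ∨
      (∀ i : ℕ, 1 ≤ i → iteratedDeriv i θ 0 = 0)) :
    iteratedDeriv 3 z 0 = deriv θ 0 / 2 ∧
    iteratedDeriv 4 z 0 = iteratedDeriv 2 θ 0 ∧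
    iteratedDeriv 5 z 0 = 3 * iteratedDeriv 3 θ 0 / 2 - (deriv θ 0)^3 / 2 := by
  clear hcase hz0 hzs
  have h1le : (1 : WithTop ℕ∞) ≤ ((⊤:ℕ∞) : WithTop ℕ∞) := by exact_mod_cast le_top
  have hθ' : ContDiff ℝ ((⊤:ℕ∞):WithTop ℕ∞) θ := hθ.of_le (by simp)
  have hθ1 : ContDiff ℝ ((⊤:ℕ∞):WithTop ℕ∞) (deriv θ) := (contDiff_infty_iff_deriv.mp hθ').2
  have hθ2 : ContDiff ℝ ((⊤:ℕ∞):WithTop ℕ∞) (deriv (deriv θ)) :=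
    (contDiff_infty_iff_deriv.mp hθ1).2
  have hθ3 : ContDiff ℝ ((⊤:ℕ∞):WithTop ℕ∞) (deriv (deriv (deriv θ))) :=
    (contDiff_infty_iff_deriv.mp hθ2).2
  have Hθ : ∀ t, HasDerivAt θ (deriv θ t) t :=
    fun t => (hθ'.differentiable (ne_of_gt (lt_of_lt_of_le one_pos h1le)) t).hasDerivAt
  have Hθ1 : ∀ t, HasDerivAt (deriv θ) (deriv (deriv θ) t) t :=
    fun t => (hθ1.differentiable (ne_of_gt (lt_of_lt_of_le one_pos h1le)) t).hasDerivAt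
  have Hθ2 : ∀ t, HasDerivAt (deriv (deriv θ)) (deriv (deriv (deriv θ)) t) t :=
    fun t => (hθ2.differentiable (ne_of_gt (lt_of_lt_of_le one_pos h1le)) t).hasDerivAt
  have Hθ3 : ∀ t, HasDerivAt (deriv (deriv (deriv θ))) (deriv (deriv (deriv (deriv θ))) t) t :=
    fun t => (hθ3.differentiable (ne_of_gt (lt_of_lt_of_le one_pos h1le)) t).hasDerivAt
  have Hx : ∀ t, HasDerivAt x (Real.cos (θ t)) t :=
    fun t => hx' t ▸ ((hxs.of_le (by simp)).differentiable (ne_of_gt (lt_of_lt_of_le one_pos h1le)) t).hasDerivAt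
  have Hy : ∀ t, HasDerivAt y (Real.sin (θ t)) t :=
    fun t => hy' t ▸ ((hys.of_le (by simp)).differentiable (ne_of_gt (lt_of_lt_of_le one_pos h1le)) t).hasDerivAt
  have Hcos : ∀ t, HasDerivAt (fun s => Real.cos (θ s)) (-Real.sin (θ t) * deriv θ t) t :=
    fun t => (Real.hasDerivAt_cos (θ t)).comp t (Hθ t)
  have Hsin : ∀ t, HasDerivAt (fun s => Real.sin (θ s)) (Real.cos (θ t) * deriv θ t) t :=
    fun t => (Real.hasDerivAt_sin (θ t)).comp t (Hθ t)
  -- U = x cos θ + y sin θ, V = x sin θ - y cos θ; U' = 1 - θ' V, V' = θ' U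
  have HU : ∀ t, HasDerivAt (fun s => x s * Real.cos (θ s) + y s * Real.sin (θ s))
      (1 - deriv θ t * (x t * Real.sin (θ t) - y t * Real.cos (θ t))) t := by
    intro t
    have h := ((Hx t).mul (Hcos t)).add ((Hy t).mul (Hsin t))
    refine h.congr_deriv ?_
    linear_combination Real.sin_sq_add_cos_sq (θ t)
  have HV : ∀ t, HasDerivAt (fun s => x s * Real.sin (θ s) - y s * Real.cos (θ s))
      (deriv θ t * (x t * Real.cos (θ t) + y t * Real.sin (θ t))) t := by
    intro t
    have h := ((Hx t).mul (Hsin t)).sub ((Hy t).mul (Hcos t))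
    refine h.congr_deriv ?_
    ring
  -- W = 1 - θ' V with W' = -(θ'' V + θ' (θ' U))
  have HW : ∀ t, HasDerivAt
      (fun s => 1 - deriv θ s * (x s * Real.sin (θ s) - y s * Real.cos (θ s)))
      (0 - (deriv (deriv θ) t * (x t * Real.sin (θ t) - y t * Real.cos (θ t)) +
        deriv θ t * (deriv θ t * (x t * Real.cos (θ t) + y t * Real.sin (θ t))))) t :=
    fun t => (hasDerivAt_const t (1:ℝ)).sub ((Hθ1 t).mul (HV t))
  have HW2 : ∀ t, HasDerivAt
      (fun s => 0 - (deriv (deriv θ) s * (x s * Real.sin (θ s) - y s * Real.cos (θ s)) +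
        deriv θ s * (deriv θ s * (x s * Real.cos (θ s) + y s * Real.sin (θ s)))))
      (0 - ((deriv (deriv (deriv θ)) t * (x t * Real.sin (θ t) - y t * Real.cos (θ t)) +
          deriv (deriv θ) t * (deriv θ t * (x t * Real.cos (θ t) + y t * Real.sin (θ t)))) +
        (deriv (deriv θ) t * (deriv θ t * (x t * Real.cos (θ t) + y t * Real.sin (θ t))) +
          deriv θ t * (deriv (deriv θ) t * (x t * Real.cos (θ t) + y t * Real.sin (θ t)) +
            deriv θ t * (1 - deriv θ t * (x t * Real.sin (θ t) - y t * Real.cos (θ t))))))) t :=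
    fun t => (hasDerivAt_const t (0:ℝ)).sub
      (((Hθ2 t).mul (HV t)).add ((Hθ1 t).mul ((Hθ1 t).mul (HU t))))
  -- Function formulas for the iterated derivatives of z
  have E1 : deriv z = fun t => (x t * Real.sin (θ t) - y t * Real.cos (θ t)) / 2 := by
    funext t; rw [hz' t, hx' t, hy' t]
  have E2 : iteratedDeriv 2 z =
      fun t => deriv θ t * (x t * Real.cos (θ t) + y t * Real.sin (θ t)) / 2 := by
    funext t
    rw [show (2:ℕ) = 1 + 1 from rfl, iteratedDeriv_succ, iteratedDeriv_one, E1]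
    exact ((HV t).div_const 2).deriv
  have E3 : iteratedDeriv 3 z = fun t =>
      (deriv (deriv θ) t * (x t * Real.cos (θ t) + y t * Real.sin (θ t)) +
        deriv θ t * (1 - deriv θ t * (x t * Real.sin (θ t) - y t * Real.cos (θ t)))) / 2 := by
    funext t
    rw [show (3:ℕ) = 2 + 1 from rfl, iteratedDeriv_succ, E2]
    exact (((Hθ1 t).mul (HU t)).div_const 2).deriv
  have E4 : iteratedDeriv 4 z = fun t =>
      ((deriv (deriv (deriv θ)) t * (x t * Real.cos (θ t) + y t * Real.sin (θ t)) +
        deriv (deriv θ) t * (1 - deriv θ t * (x t * Real.sin (θ t) - y t * Real.cos (θ t)))) +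
       (deriv (deriv θ) t * (1 - deriv θ t * (x t * Real.sin (θ t) - y t * Real.cos (θ t))) +
        deriv θ t * (0 - (deriv (deriv θ) t * (x t * Real.sin (θ t) - y t * Real.cos (θ t)) +
          deriv θ t * (deriv θ t * (x t * Real.cos (θ t) + y t * Real.sin (θ t))))))) / 2 := by
    funext t
    rw [show (4:ℕ) = 3 + 1 from rfl, iteratedDeriv_succ, E3]
    exact ((((Hθ2 t).mul (HU t)).add ((Hθ1 t).mul (HW t))).div_const 2).deriv
  have i2 : iteratedDeriv 2 θ 0 = deriv (deriv θ) 0 := by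
    rw [show (2:ℕ) = 1 + 1 from rfl, iteratedDeriv_succ, iteratedDeriv_one]
  have i3 : iteratedDeriv 3 θ 0 = deriv (deriv (deriv θ)) 0 := by
    rw [show (3:ℕ) = 1 + 1 + 1 from rfl, iteratedDeriv_succ, iteratedDeriv_succ,
      iteratedDeriv_one]
  refine ⟨?_, ?_, ?_⟩
  · rw [E3]; simp only [hx0, hy0]; ring
  · rw [E4, i2]; simp only [hx0, hy0]; ring
  · have H5 := ((((Hθ3 0).mul (HU 0)).add ((Hθ2 0).mul (HW 0))).add
      (((Hθ2 0).mul (HW 0)).add ((Hθ1 0).mul (HW2 0)))).div_const 2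
    rw [show (5:ℕ) = 4 + 1 from rfl, iteratedDeriv_succ, E4, i3]
    refine H5.deriv.trans ?_
    simp only [hx0, hy0]
    ring
end

section
/- With x, y, z, θ as in the standard arc-length horizontal curve setup from the origin, z(t) = (θ̇(0)/12)t³ + (θ̈(0)/24)t⁴ + (θ⃛(0)/80 - θ̇(0)³/240)t⁵ + O(t⁶) as t → 0. -/
open Filter Topology Asymptotics intervalIntegral

lemma aux_isBigO : ∀ (n : ℕ) (g : ℝ → ℝ), ContDiff ℝ ((⊤:ℕ∞) : WithTop ℕ∞) g →
    (∀ k ≤ n, iteratedDeriv k g 0 = 0) → g =O[𝓝 (0:ℝ)] fun t => t ^ (n+1) := by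
  intro n
  induction n with
  | zero =>
    intro g hg h0
    have hg0 : g 0 = 0 := by simpa using h0 0 le_rfl
    have hd : HasDerivAt g (deriv g 0) 0 := (hg.differentiable (by simp) 0).hasDerivAt
    have h1 : (fun t => g t - g 0 - (t - 0) • deriv g 0) =o[𝓝 0] fun t => t - 0 :=
      hasDerivAt_iff_isLittleO.mp hd
    have h2 : (fun t : ℝ => g t - t * deriv g 0) =O[𝓝 0] fun t => t := by
      simpa [hg0, smul_eq_mul] using h1.isBigO
    have h3 : (fun t : ℝ => t * deriv g 0) =O[𝓝 0] fun t => t := by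
      simpa [mul_comm] using (isBigO_refl (fun t : ℝ => t) (𝓝 0)).const_mul_left (deriv g 0)
    have := h2.add h3
    simpa using this
  | succ n ih =>
    intro g hg h0
    set h := deriv g with hh
    have hg' : ContDiff ℝ ((⊤:ℕ∞) : WithTop ℕ∞) h := (contDiff_infty_iff_deriv.mp hg).2
    have h0' : ∀ k ≤ n, iteratedDeriv k h 0 = 0 := fun k hk => by
      rw [hh, ← iteratedDeriv_succ']; exact h0 (k+1) (by omega)
    obtain ⟨C, hC0, hC⟩ := (ih h hg' h0').exists_nonneg
    obtain ⟨ε, hε, hball⟩ := Metric.eventually_nhds_iff.mp (isBigOWith_iff.mp hC)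
    rw [isBigO_iff]
    refine ⟨C, Metric.eventually_nhds_iff.mpr ⟨ε, hε, fun t ht => ?_⟩⟩
    have hg0 : g 0 = 0 := by simpa using h0 0 (by omega)
    have hint : (∫ s in (0:ℝ)..t, h s) = g t - g 0 := by
      apply integral_deriv_eq_sub (fun s _ => (hg.differentiable (by simp) s))
      exact (hg'.continuous).intervalIntegrable 0 t
    have htabs : dist t 0 < ε := ht
    rw [Real.dist_eq, sub_zero] at htabs
    have hbound : ∀ s ∈ Set.uIoc (0:ℝ) t, ‖h s‖ ≤ C * |t| ^ (n+1) := by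
      intro s hs
      have hs1 : |s| ≤ |t| := by
        rcases Set.mem_uIoc.mp hs with h' | h' <;> cases abs_cases t <;>
          cases abs_cases s <;> linarith [h'.1, h'.2]
      have hsd : dist s 0 < ε := by rw [Real.dist_eq, sub_zero]; linarith
      calc ‖h s‖ ≤ C * ‖s ^ (n+1)‖ := hball hsd
        _ = C * |s| ^ (n+1) := by rw [Real.norm_eq_abs, abs_pow]
        _ ≤ C * |t| ^ (n+1) := by
            gcongr
    calc ‖g t‖ = ‖∫ s in (0:ℝ)..t, h s‖ := by rw [hint, hg0, sub_zero]
      _ ≤ C * |t| ^ (n+1) * |t - 0| := norm_integral_le_of_norm_le_const hbound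
      _ = C * ‖t ^ (n+1+1)‖ := by
          rw [Real.norm_eq_abs, abs_pow, sub_zero, pow_succ]; ring

/-- For the standard arc-length horizontal curve setup from the origin,
z(t) = (θ̇(0)/12)t³ + (θ̈(0)/24)t⁴ + (θ⃛(0)/80 - θ̇(0)³/240)t⁵ + O(t⁶). -/
theorem z_taylor (θ x y z : ℝ → ℝ)
    (hθ : ContDiff ℝ (⊤ : ℕ∞) θ) (hxs : ContDiff ℝ (⊤ : ℕ∞) x) (hys : ContDiff ℝ (⊤ : ℕ∞) y)
    (hzs : ContDiff ℝ (⊤ : ℕ∞) z)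
    (hx' : ∀ t, deriv x t = Real.cos (θ t))
    (hy' : ∀ t, deriv y t = Real.sin (θ t))
    (hz' : ∀ t, deriv z t = (x t * deriv y t - y t * deriv x t) / 2)
    (hx0 : x 0 = 0) (hy0 : y 0 = 0) (hz0 : z 0 = 0) :
    (fun t => z t - (deriv θ 0 / 12 * t^3 + iteratedDeriv 2 θ 0 / 24 * t^4 +
      (iteratedDeriv 3 θ 0 / 80 - (deriv θ 0)^3 / 240) * t^5)) =O[𝓝 (0:ℝ)]
      (fun t => t^6) := by
  have hθi : ContDiff ℝ ((⊤:ℕ∞) : WithTop ℕ∞) θ := hθ.of_le (by simp)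
  have hxi : ContDiff ℝ ((⊤:ℕ∞) : WithTop ℕ∞) x := hxs.of_le (by simp)
  have hyi : ContDiff ℝ ((⊤:ℕ∞) : WithTop ℕ∞) y := hys.of_le (by simp)
  have hzi : ContDiff ℝ ((⊤:ℕ∞) : WithTop ℕ∞) z := hzs.of_le (by simp)
  have hθ1s : ContDiff ℝ ((⊤:ℕ∞) : WithTop ℕ∞) (deriv θ) := (contDiff_infty_iff_deriv.mp hθi).2
  have hθ2s : ContDiff ℝ ((⊤:ℕ∞) : WithTop ℕ∞) (deriv (deriv θ)) :=
    (contDiff_infty_iff_deriv.mp hθ1s).2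
  have hθ3s : ContDiff ℝ ((⊤:ℕ∞) : WithTop ℕ∞) (deriv (deriv (deriv θ))) :=
    (contDiff_infty_iff_deriv.mp hθ2s).2
  have hdiff : ∀ f : ℝ → ℝ, ContDiff ℝ ((⊤:ℕ∞) : WithTop ℕ∞) f →
      ∀ t, HasDerivAt f (deriv f t) t :=
    fun f hf t => (hf.differentiable (by simp) t).hasDerivAt
  set θ1 := deriv θ with hθ1def
  set θ2 := deriv θ1 with hθ2def
  set θ3 := deriv θ2 with hθ3def
  have i2 : iteratedDeriv 2 θ 0 = θ2 0 := by
    rw [show (2:ℕ) = 1+1 from rfl, iteratedDeriv_succ, iteratedDeriv_one, hθ2def, hθ1def]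
  have i3 : iteratedDeriv 3 θ 0 = θ3 0 := by
    rw [show (3:ℕ) = 1+1+1 from rfl, iteratedDeriv_succ, iteratedDeriv_succ, iteratedDeriv_one,
      hθ3def, hθ2def, hθ1def]
  rw [i2, i3]
  -- pointwise derivative facts
  have hθd : ∀ t, HasDerivAt θ (θ1 t) t := by
    intro t; rw [hθ1def]; exact hdiff θ hθi t
  have hθ1d : ∀ t, HasDerivAt θ1 (θ2 t) t := by
    intro t; rw [hθ2def]; exact hdiff θ1 hθ1s t
  have hθ2d : ∀ t, HasDerivAt θ2 (θ3 t) t := by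
    intro t; rw [hθ3def]; exact hdiff θ2 hθ2s t
  have hθ3d : HasDerivAt θ3 (deriv θ3 0) 0 := hdiff θ3 hθ3s 0
  have hxd : ∀ t, HasDerivAt x (Real.cos (θ t)) t := fun t => hx' t ▸ hdiff x hxi t
  have hyd : ∀ t, HasDerivAt y (Real.sin (θ t)) t := fun t => hy' t ▸ hdiff y hyi t
  have hCd : ∀ t, HasDerivAt (fun u => Real.cos (θ u)) (-Real.sin (θ t) * θ1 t) t :=
    fun t => (Real.hasDerivAt_cos (θ t)).comp t (hθd t)
  have hSd : ∀ t, HasDerivAt (fun u => Real.sin (θ u)) (Real.cos (θ t) * θ1 t) t :=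
    fun t => (Real.hasDerivAt_sin (θ t)).comp t (hθd t)
  have hUd : ∀ t, HasDerivAt (fun u => x u * Real.cos (θ u) + y u * Real.sin (θ u))
      (Real.cos (θ t) * Real.cos (θ t) + x t * (-Real.sin (θ t) * θ1 t) +
        (Real.sin (θ t) * Real.sin (θ t) + y t * (Real.cos (θ t) * θ1 t))) t :=
    fun t => ((hxd t).mul (hCd t)).add ((hyd t).mul (hSd t))
  have hVd : ∀ t, HasDerivAt (fun u => y u * Real.cos (θ u) - x u * Real.sin (θ u))
      ((Real.sin (θ t) * Real.cos (θ t) + y t * (-Real.sin (θ t) * θ1 t)) -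
        (Real.cos (θ t) * Real.sin (θ t) + x t * (Real.cos (θ t) * θ1 t))) t :=
    fun t => ((hyd t).mul (hCd t)).sub ((hxd t).mul (hSd t))
  -- the chain of derivatives of G
  have dG1 : ∀ t, HasDerivAt
      (fun u => z u - (θ1 0 / 12 * u^3 + θ2 0 / 24 * u^4 +
        (θ3 0 / 80 - θ1 0 ^ 3 / 240) * u^5))
      ((x t * Real.sin (θ t) - y t * Real.cos (θ t)) / 2 -
        (θ1 0 / 4 * t^2 + θ2 0 / 6 * t^3 + 5 * (θ3 0 / 80 - θ1 0 ^ 3 / 240) * t^4)) t := by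
    intro t
    refine ((hdiff z hzi t).sub ((((hasDerivAt_pow 3 t).const_mul (θ1 0 / 12)).add
      ((hasDerivAt_pow 4 t).const_mul (θ2 0 / 24))).add
      ((hasDerivAt_pow 5 t).const_mul (θ3 0 / 80 - θ1 0 ^ 3 / 240)))).congr_deriv ?_
    rw [hz' t, hx' t, hy' t]
    push_cast
    ring
  have dG2 : ∀ t, HasDerivAt
      (fun u => (x u * Real.sin (θ u) - y u * Real.cos (θ u)) / 2 -
        (θ1 0 / 4 * u^2 + θ2 0 / 6 * u^3 + 5 * (θ3 0 / 80 - θ1 0 ^ 3 / 240) * u^4))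
      (θ1 t * (x t * Real.cos (θ t) + y t * Real.sin (θ t)) / 2 -
        (θ1 0 / 2 * t + θ2 0 / 2 * t^2 + 20 * (θ3 0 / 80 - θ1 0 ^ 3 / 240) * t^3)) t := by
    intro t
    refine ((((hxd t).mul (hSd t)).sub ((hyd t).mul (hCd t))).div_const 2 |>.sub
      ((((hasDerivAt_pow 2 t).const_mul (θ1 0 / 4)).add
        ((hasDerivAt_pow 3 t).const_mul (θ2 0 / 6))).add
      ((hasDerivAt_pow 4 t).const_mul (5 * (θ3 0 / 80 - θ1 0 ^ 3 / 240))))).congr_deriv ?_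
    push_cast
    ring
  have dG3 : ∀ t, HasDerivAt
      (fun u => θ1 u * (x u * Real.cos (θ u) + y u * Real.sin (θ u)) / 2 -
        (θ1 0 / 2 * u + θ2 0 / 2 * u^2 + 20 * (θ3 0 / 80 - θ1 0 ^ 3 / 240) * u^3))
      ((θ2 t * (x t * Real.cos (θ t) + y t * Real.sin (θ t)) + θ1 t +
        θ1 t ^ 2 * (y t * Real.cos (θ t) - x t * Real.sin (θ t))) / 2 -
        (θ1 0 / 2 + θ2 0 * t + 60 * (θ3 0 / 80 - θ1 0 ^ 3 / 240) * t^2)) t := by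
    intro t
    refine (((hθ1d t).mul (hUd t)).div_const 2 |>.sub
      ((((hasDerivAt_id t).const_mul (θ1 0 / 2)).add
        ((hasDerivAt_pow 2 t).const_mul (θ2 0 / 2))).add
      ((hasDerivAt_pow 3 t).const_mul (20 * (θ3 0 / 80 - θ1 0 ^ 3 / 240))))).congr_deriv ?_
    push_cast
    linear_combination (θ1 t / 2) * Real.sin_sq_add_cos_sq (θ t)
  have dG4 : ∀ t, HasDerivAt
      (fun u => (θ2 u * (x u * Real.cos (θ u) + y u * Real.sin (θ u)) + θ1 u +
        θ1 u ^ 2 * (y u * Real.cos (θ u) - x u * Real.sin (θ u))) / 2 -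
        (θ1 0 / 2 + θ2 0 * u + 60 * (θ3 0 / 80 - θ1 0 ^ 3 / 240) * u^2))
      ((θ3 t * (x t * Real.cos (θ t) + y t * Real.sin (θ t)) + 2 * θ2 t +
        3 * θ1 t * θ2 t * (y t * Real.cos (θ t) - x t * Real.sin (θ t)) -
        θ1 t ^ 3 * (x t * Real.cos (θ t) + y t * Real.sin (θ t))) / 2 -
        (θ2 0 + 120 * (θ3 0 / 80 - θ1 0 ^ 3 / 240) * t)) t := by
    intro t
    refine (((((hθ2d t).mul (hUd t)).add (hθ1d t)).add
      (((hθ1d t).pow 2).mul (hVd t))).div_const 2 |>.sub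
      (((hasDerivAt_const t (θ1 0 / 2)).add ((hasDerivAt_id t).const_mul (θ2 0))).add
      ((hasDerivAt_pow 2 t).const_mul (60 * (θ3 0 / 80 - θ1 0 ^ 3 / 240))))).congr_deriv ?_
    push_cast
    simp only [Pi.pow_apply]
    linear_combination (θ2 t / 2) * Real.sin_sq_add_cos_sq (θ t)
  -- function-level equalities
  have e1 := funext fun t => (dG1 t).deriv
  have e2 := funext fun t => (dG2 t).deriv
  have e3 := funext fun t => (dG3 t).deriv
  have e4 := funext fun t => (dG4 t).deriv
  -- smoothness of G
  have hsm : ContDiff ℝ ((⊤:ℕ∞) : WithTop ℕ∞)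
      (fun t => z t - (θ1 0 / 12 * t^3 + θ2 0 / 24 * t^4 +
        (θ3 0 / 80 - θ1 0 ^ 3 / 240) * t^5)) := by
    apply hzi.sub
    fun_prop
  have hvan : ∀ k ≤ 5, iteratedDeriv k
      (fun t => z t - (θ1 0 / 12 * t^3 + θ2 0 / 24 * t^4 +
        (θ3 0 / 80 - θ1 0 ^ 3 / 240) * t^5)) 0 = 0 := by
    intro k hk
    interval_cases k
    · simp [hz0]
    · rw [iteratedDeriv_one, e1]
      simp [hx0, hy0]
    · rw [show (2:ℕ) = 1+1 from rfl, iteratedDeriv_succ, iteratedDeriv_one, e1, e2]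
      simp [hx0, hy0]
    · rw [show (3:ℕ) = 1+1+1 from rfl, iteratedDeriv_succ, iteratedDeriv_succ,
        iteratedDeriv_one, e1, e2, e3]
      simp [hx0, hy0]
    · rw [show (4:ℕ) = 1+1+1+1 from rfl, iteratedDeriv_succ, iteratedDeriv_succ,
        iteratedDeriv_succ, iteratedDeriv_one, e1, e2, e3, e4]
      simp [hx0, hy0]
    · rw [show (5:ℕ) = 1+1+1+1+1 from rfl, iteratedDeriv_succ, iteratedDeriv_succ,
        iteratedDeriv_succ, iteratedDeriv_succ, iteratedDeriv_one, e1, e2, e3, e4]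
      have h5 : HasDerivAt
          (fun u => (θ3 u * (x u * Real.cos (θ u) + y u * Real.sin (θ u)) + 2 * θ2 u +
            3 * θ1 u * θ2 u * (y u * Real.cos (θ u) - x u * Real.sin (θ u)) -
            θ1 u ^ 3 * (x u * Real.cos (θ u) + y u * Real.sin (θ u))) / 2 -
            (θ2 0 + 120 * (θ3 0 / 80 - θ1 0 ^ 3 / 240) * u)) _ 0 :=
        ((((hθ3d.mul (hUd 0)).add ((hθ2d 0).const_mul 2)).add
          ((((hθ1d 0).const_mul 3).mul (hθ2d 0)).mul (hVd 0))).sub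
          (((hθ1d 0).pow 3).mul (hUd 0))).div_const 2 |>.sub
          (((hasDerivAt_id 0).const_mul
            (120 * (θ3 0 / 80 - θ1 0 ^ 3 / 240))).const_add (θ2 0))
      rw [h5.deriv, hx0, hy0]
      push_cast
      simp only [Pi.pow_apply]
      linear_combination ((θ3 0 - θ1 0 ^ 3) / 2) * Real.sin_sq_add_cos_sq (θ 0)
  exact aux_isBigO 5 _ hsm hvan
end

section
/- With x, y, θ as in the standard arc-length horizontal curve setup from the origin, x²(t) + y²(t) = t² - (θ̇(0)²/12)t⁴ - (θ̇(0)θ̈(0)/12)t⁵ + (-θ̇(0)θ⃛(0)/40 - θ̈(0)²/45 + θ̇(0)⁴/360)t⁶ + O(t⁷) as t → 0. -/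
open Filter Topology Asymptotics


lemma aux_step {g : ℝ → ℝ} (hg : Differentiable ℝ g) (h0 : g 0 = 0) {n : ℕ}
    (hd : (deriv g) =O[𝓝 (0:ℝ)] fun t => t ^ n) :
    g =O[𝓝 (0:ℝ)] fun t => t ^ (n+1) := by
  obtain ⟨Cb, hCb⟩ := hd.bound
  rw [Metric.eventually_nhds_iff] at hCb
  obtain ⟨ε, hε, hB⟩ := hCb
  rw [isBigO_iff]
  refine ⟨|Cb|, Metric.eventually_nhds_iff.2 ⟨ε, hε, fun t ht => ?_⟩⟩
  have habs : ∀ s : ℝ, s ∈ Set.Icc (-|t|) |t| → |s| < ε := by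
    intro s hs
    have : |s| ≤ |t| := abs_le.2 ⟨hs.1, hs.2⟩
    calc |s| ≤ |t| := this
    _ < ε := by simpa [Real.dist_eq] using ht
  have key := Convex.norm_image_sub_le_of_norm_deriv_le (f := g)
    (s := Set.Icc (-|t|) (|t|)) (C := |Cb| * |t|^n)
    (fun s _ => hg s)
    (fun s hs => by
      have h1 := hB (y := s) (by simpa [Real.dist_eq] using habs s hs)
      have h2 : |s| ≤ |t| := abs_le.2 ⟨hs.1, hs.2⟩
      calc ‖deriv g s‖ ≤ Cb * ‖s ^ n‖ := h1
      _ ≤ |Cb| * ‖s ^ n‖ := mul_le_mul_of_nonneg_right (le_abs_self Cb) (norm_nonneg _)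
      _ ≤ |Cb| * |t| ^ n := by
          rw [Real.norm_eq_abs, abs_pow]
          exact mul_le_mul_of_nonneg_left (pow_le_pow_left₀ (abs_nonneg _) h2 n) (abs_nonneg _))
    (convex_Icc _ _)
    (x := 0) (y := t)
    (by simp [abs_nonneg]) (by simp [neg_abs_le, le_abs_self])
  rw [h0, sub_zero] at key
  calc ‖g t‖ ≤ |Cb| * |t| ^ n * ‖t - 0‖ := key
  _ = |Cb| * ‖t ^ (n+1)‖ := by
      rw [sub_zero, Real.norm_eq_abs, Real.norm_eq_abs, abs_pow, pow_succ]; ring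

lemma taylorO : ∀ (n : ℕ) {g : ℝ → ℝ}, ContDiff ℝ ((⊤ : ℕ∞) : WithTop ℕ∞) g →
    (∀ k ≤ n, iteratedDeriv k g 0 = 0) → g =O[𝓝 (0:ℝ)] fun t => t ^ (n+1)
  | 0, g, hg, h => by
      have h0 : g 0 = 0 := by simpa using h 0 le_rfl
      have hone : (1 : WithTop ℕ∞) ≤ ((⊤ : ℕ∞) : WithTop ℕ∞) := by exact_mod_cast le_top
      refine aux_step (hg.differentiable (by simp)) h0 ?_
      have hc : ContinuousAt (deriv g) 0 := (hg.continuous_deriv hone).continuousAt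
      simpa using hc.tendsto.isBigO_one ℝ
  | n+1, g, hg, h => by
      have h0 : g 0 = 0 := by simpa using h 0 (by omega)
      have hone : (1 : WithTop ℕ∞) ≤ ((⊤ : ℕ∞) : WithTop ℕ∞) := by exact_mod_cast le_top
      have hd : ContDiff ℝ ((⊤ : ℕ∞) : WithTop ℕ∞) (deriv g) := (contDiff_infty_iff_deriv.mp hg).2
      exact aux_step (hg.differentiable (by simp)) h0 (taylorO n hd (fun k hk => by
        rw [← iteratedDeriv_succ']
        exact h (k+1) (by omega)))

lemma cos_int_taylor (θ z : ℝ → ℝ) (hθ : ContDiff ℝ ((⊤ : ℕ∞) : WithTop ℕ∞) θ)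
    (hz : ∀ t, z t = ∫ s in (0:ℝ)..t, Real.cos (θ s))
    (A1 A2 A3 A4 A5 : ℝ)
    (hA1 : A1 = Real.cos (θ 0))
    (hA2 : A2 = -Real.sin (θ 0) * deriv θ 0)
    (hA3 : A3 = -Real.cos (θ 0) * (deriv θ 0)^2 - Real.sin (θ 0) * iteratedDeriv 2 θ 0)
    (hA4 : A4 = Real.sin (θ 0) * (deriv θ 0)^3
        - 3 * (Real.cos (θ 0) * (deriv θ 0 * iteratedDeriv 2 θ 0))
        - Real.sin (θ 0) * iteratedDeriv 3 θ 0)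
    (hA5 : A5 = Real.cos (θ 0) * (deriv θ 0)^4
        + 6 * Real.sin (θ 0) * (deriv θ 0)^2 * iteratedDeriv 2 θ 0
        - 3 * Real.cos (θ 0) * (iteratedDeriv 2 θ 0)^2
        - 4 * Real.cos (θ 0) * deriv θ 0 * iteratedDeriv 3 θ 0
        - Real.sin (θ 0) * iteratedDeriv 4 θ 0) :
    (fun t => z t - (A1 * t + A2 * t^2/2 + A3 * t^3/6 + A4 * t^4/24 + A5 * t^5/120))
      =O[𝓝 (0:ℝ)] fun t => t ^ 6 := by
  have hone : (1 : WithTop ℕ∞) ≤ ((⊤ : ℕ∞) : WithTop ℕ∞) := by exact_mod_cast le_top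
  set θ1 := deriv θ with hθ1def
  set θ2 := deriv θ1 with hθ2def
  set θ3 := deriv θ2 with hθ3def
  set θ4 := deriv θ3 with hθ4def
  have hθ1s : ContDiff ℝ ((⊤ : ℕ∞) : WithTop ℕ∞) θ1 := (contDiff_infty_iff_deriv.mp hθ).2
  have hθ2s : ContDiff ℝ ((⊤ : ℕ∞) : WithTop ℕ∞) θ2 := (contDiff_infty_iff_deriv.mp hθ1s).2
  have hθ3s : ContDiff ℝ ((⊤ : ℕ∞) : WithTop ℕ∞) θ3 := (contDiff_infty_iff_deriv.mp hθ2s).2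
  have hd1 : ∀ t, HasDerivAt θ (θ1 t) t := fun t => (hθ.differentiable (by simp) t).hasDerivAt
  have hd2 : ∀ t, HasDerivAt θ1 (θ2 t) t := fun t => (hθ1s.differentiable (by simp) t).hasDerivAt
  have hd3 : ∀ t, HasDerivAt θ2 (θ3 t) t := fun t => (hθ2s.differentiable (by simp) t).hasDerivAt
  have hd4 : ∀ t, HasDerivAt θ3 (θ4 t) t := fun t => (hθ3s.differentiable (by simp) t).hasDerivAt
  have hi2 : iteratedDeriv 2 θ 0 = θ2 0 := by
    simp [iteratedDeriv_succ, iteratedDeriv_zero, hθ1def, hθ2def]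
  have hi3 : iteratedDeriv 3 θ 0 = θ3 0 := by
    simp [iteratedDeriv_succ, iteratedDeriv_zero, hθ1def, hθ2def, hθ3def]
  have hi4 : iteratedDeriv 4 θ 0 = θ4 0 := by
    simp [iteratedDeriv_succ, iteratedDeriv_zero, hθ1def, hθ2def, hθ3def, hθ4def]
  -- derivative of z
  have hzw : ∀ t, HasDerivAt z (Real.cos (θ t)) t := by
    intro t
    have hcont : Continuous fun s => Real.cos (θ s) := Real.continuous_cos.comp hθ.continuous
    have h := (hcont.integral_hasStrictDerivAt 0 t).hasDerivAt
    have hfun : z = fun u => ∫ s in (0:ℝ)..u, Real.cos (θ s) := funext hz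
    rw [hfun]
    exact h
  -- derivatives of cos ∘ θ
  have Hw1 : ∀ t : ℝ, HasDerivAt (fun y => Real.cos (θ y)) (-Real.sin (θ t) * θ1 t) t :=
    fun t => (hd1 t).cos
  have Hw2 : ∀ t : ℝ, HasDerivAt (fun y => -Real.sin (θ y) * θ1 y)
      (-Real.cos (θ t) * θ1 t^2 - Real.sin (θ t) * θ2 t) t := by
    intro t
    exact (((hd1 t).sin.neg.mul (hd2 t)).congr_deriv (by simp only [Pi.neg_apply, Pi.pow_apply, Pi.mul_apply]; ring))
  have Hw3 : ∀ t : ℝ, HasDerivAt (fun y => -Real.cos (θ y) * θ1 y^2 - Real.sin (θ y) * θ2 y)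
      (Real.sin (θ t) * θ1 t^3 - 3 * (Real.cos (θ t) * (θ1 t * θ2 t)) - Real.sin (θ t) * θ3 t) t := by
    intro t
    exact ((((hd1 t).cos.neg.mul ((hd2 t).pow 2)).sub ((hd1 t).sin.mul (hd3 t))).congr_deriv
      (by simp only [Pi.neg_apply, Pi.pow_apply, Pi.mul_apply]; ring))
  have Hw4 : ∀ t : ℝ, HasDerivAt
      (fun y => Real.sin (θ y) * θ1 y^3 - 3 * (Real.cos (θ y) * (θ1 y * θ2 y)) - Real.sin (θ y) * θ3 y)
      (Real.cos (θ t) * θ1 t^4 + 6 * Real.sin (θ t) * θ1 t^2 * θ2 t - 3 * Real.cos (θ t) * θ2 t^2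
        - 4 * Real.cos (θ t) * θ1 t * θ3 t - Real.sin (θ t) * θ4 t) t := by
    intro t
    exact ((((hd1 t).sin.mul ((hd2 t).pow 3)).sub
      (HasDerivAt.const_mul (3:ℝ) ((hd1 t).cos.mul ((hd2 t).mul (hd3 t))))).sub
      ((hd1 t).sin.mul (hd4 t))).congr_deriv (by simp only [Pi.neg_apply, Pi.pow_apply, Pi.mul_apply]; ring)
  -- polynomial derivatives
  have HP1 : ∀ t : ℝ, HasDerivAt (fun y => A1*y + A2*y^2/2 + A3*y^3/6 + A4*y^4/24 + A5*y^5/120)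
      (A1 + A2*t + A3*t^2/2 + A4*t^3/6 + A5*t^4/24) t := by
    intro t
    exact ((((((hasDerivAt_id t).const_mul A1).add
      (((hasDerivAt_pow 2 t).const_mul A2).div_const 2)).add
      (((hasDerivAt_pow 3 t).const_mul A3).div_const 6)).add
      (((hasDerivAt_pow 4 t).const_mul A4).div_const 24)).add
      (((hasDerivAt_pow 5 t).const_mul A5).div_const 120)).congr_deriv (by push_cast; ring)
  have HP2 : ∀ t : ℝ, HasDerivAt (fun y => A1 + A2*y + A3*y^2/2 + A4*y^3/6 + A5*y^4/24)
      (A2 + A3*t + A4*t^2/2 + A5*t^3/6) t := by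
    intro t
    exact (((((hasDerivAt_const t A1).add ((hasDerivAt_id t).const_mul A2)).add
      (((hasDerivAt_pow 2 t).const_mul A3).div_const 2)).add
      (((hasDerivAt_pow 3 t).const_mul A4).div_const 6)).add
      (((hasDerivAt_pow 4 t).const_mul A5).div_const 24)).congr_deriv (by push_cast; ring)
  have HP3 : ∀ t : ℝ, HasDerivAt (fun y => A2 + A3*y + A4*y^2/2 + A5*y^3/6)
      (A3 + A4*t + A5*t^2/2) t := by
    intro t
    exact ((((hasDerivAt_const t A2).add ((hasDerivAt_id t).const_mul A3)).add
      (((hasDerivAt_pow 2 t).const_mul A4).div_const 2)).add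
      (((hasDerivAt_pow 3 t).const_mul A5).div_const 6)).congr_deriv (by push_cast; ring)
  have HP4 : ∀ t : ℝ, HasDerivAt (fun y => A3 + A4*y + A5*y^2/2) (A4 + A5*t) t := by
    intro t
    exact (((hasDerivAt_const t A3).add ((hasDerivAt_id t).const_mul A4)).add
      (((hasDerivAt_pow 2 t).const_mul A5).div_const 2)).congr_deriv (by push_cast; ring)
  have HP5 : ∀ t : ℝ, HasDerivAt (fun y => A4 + A5*y) A5 t := by
    intro t
    exact ((hasDerivAt_const t A4).add ((hasDerivAt_id t).const_mul A5)).congr_deriv (by ring)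
  -- the chain for g
  have G0 : ∀ t : ℝ, HasDerivAt
      (fun y => z y - (A1*y + A2*y^2/2 + A3*y^3/6 + A4*y^4/24 + A5*y^5/120))
      (Real.cos (θ t) - (A1 + A2*t + A3*t^2/2 + A4*t^3/6 + A5*t^4/24)) t :=
    fun t => (hzw t).sub (HP1 t)
  have G1 : ∀ t : ℝ, HasDerivAt
      (fun y => Real.cos (θ y) - (A1 + A2*y + A3*y^2/2 + A4*y^3/6 + A5*y^4/24))
      (-Real.sin (θ t) * θ1 t - (A2 + A3*t + A4*t^2/2 + A5*t^3/6)) t :=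
    fun t => (Hw1 t).sub (HP2 t)
  have G2 : ∀ t : ℝ, HasDerivAt
      (fun y => -Real.sin (θ y) * θ1 y - (A2 + A3*y + A4*y^2/2 + A5*y^3/6))
      (-Real.cos (θ t) * θ1 t^2 - Real.sin (θ t) * θ2 t - (A3 + A4*t + A5*t^2/2)) t :=
    fun t => (Hw2 t).sub (HP3 t)
  have G3 : ∀ t : ℝ, HasDerivAt
      (fun y => -Real.cos (θ y) * θ1 y^2 - Real.sin (θ y) * θ2 y - (A3 + A4*y + A5*y^2/2))
      (Real.sin (θ t) * θ1 t^3 - 3 * (Real.cos (θ t) * (θ1 t * θ2 t)) - Real.sin (θ t) * θ3 t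
        - (A4 + A5*t)) t :=
    fun t => (Hw3 t).sub (HP4 t)
  have G4 : ∀ t : ℝ, HasDerivAt
      (fun y => Real.sin (θ y) * θ1 y^3 - 3 * (Real.cos (θ y) * (θ1 y * θ2 y))
        - Real.sin (θ y) * θ3 y - (A4 + A5*y))
      (Real.cos (θ t) * θ1 t^4 + 6 * Real.sin (θ t) * θ1 t^2 * θ2 t - 3 * Real.cos (θ t) * θ2 t^2
        - 4 * Real.cos (θ t) * θ1 t * θ3 t - Real.sin (θ t) * θ4 t - A5) t :=
    fun t => (Hw4 t).sub (HP5 t)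
  -- function-level deriv equalities
  have e1 : deriv (fun y => z y - (A1*y + A2*y^2/2 + A3*y^3/6 + A4*y^4/24 + A5*y^5/120))
      = fun t => Real.cos (θ t) - (A1 + A2*t + A3*t^2/2 + A4*t^3/6 + A5*t^4/24) :=
    funext fun t => (G0 t).deriv
  have e2 : deriv (fun y => Real.cos (θ y) - (A1 + A2*y + A3*y^2/2 + A4*y^3/6 + A5*y^4/24))
      = fun t => -Real.sin (θ t) * θ1 t - (A2 + A3*t + A4*t^2/2 + A5*t^3/6) :=
    funext fun t => (G1 t).deriv
  have e3 : deriv (fun y => -Real.sin (θ y) * θ1 y - (A2 + A3*y + A4*y^2/2 + A5*y^3/6))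
      = fun t => -Real.cos (θ t) * θ1 t^2 - Real.sin (θ t) * θ2 t - (A3 + A4*t + A5*t^2/2) :=
    funext fun t => (G2 t).deriv
  have e4 : deriv (fun y => -Real.cos (θ y) * θ1 y^2 - Real.sin (θ y) * θ2 y - (A3 + A4*y + A5*y^2/2))
      = fun t => Real.sin (θ t) * θ1 t^3 - 3 * (Real.cos (θ t) * (θ1 t * θ2 t))
        - Real.sin (θ t) * θ3 t - (A4 + A5*t) :=
    funext fun t => (G3 t).deriv
  have e5 : deriv (fun y => Real.sin (θ y) * θ1 y^3 - 3 * (Real.cos (θ y) * (θ1 y * θ2 y))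
        - Real.sin (θ y) * θ3 y - (A4 + A5*y))
      = fun t => Real.cos (θ t) * θ1 t^4 + 6 * Real.sin (θ t) * θ1 t^2 * θ2 t
        - 3 * Real.cos (θ t) * θ2 t^2 - 4 * Real.cos (θ t) * θ1 t * θ3 t
        - Real.sin (θ t) * θ4 t - A5 :=
    funext fun t => (G4 t).deriv
  -- smoothness of g
  have hg : ContDiff ℝ ((⊤ : ℕ∞) : WithTop ℕ∞)
      (fun y => z y - (A1*y + A2*y^2/2 + A3*y^3/6 + A4*y^4/24 + A5*y^5/120)) := by
    rw [contDiff_infty_iff_deriv]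
    constructor
    · exact fun t => (G0 t).differentiableAt
    · rw [e1]
      apply ContDiff.sub
      · exact hθ.cos
      · fun_prop (disch := norm_num)
  refine taylorO 5 hg ?_
  intro k hk
  interval_cases k
  · simp only [iteratedDeriv_zero]
    rw [hz]
    norm_num
  · simp only [iteratedDeriv_one, e1]
    rw [hA1]; ring
  · simp only [iteratedDeriv_succ, iteratedDeriv_zero, e1, e2]
    rw [hA2]; ring
  · simp only [iteratedDeriv_succ, iteratedDeriv_zero, e1, e2, e3]
    rw [hA3, hi2]; ring
  · simp only [iteratedDeriv_succ, iteratedDeriv_zero, e1, e2, e3, e4]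
    rw [hA4, hi2, hi3]; ring
  · simp only [iteratedDeriv_succ, iteratedDeriv_zero, e1, e2, e3, e4, e5]
    rw [hA5, hi2, hi3, hi4]; ring

lemma mulO {Q : ℝ → ℝ} (hQ : Continuous Q) (n : ℕ) :
    (fun t => t ^ n * Q t) =O[𝓝 (0:ℝ)] (fun t => t ^ n) := by
  have h1 : (fun t : ℝ => Q t) =O[𝓝 (0:ℝ)] (fun _ : ℝ => (1:ℝ)) := (hQ.tendsto 0).isBigO_one ℝ
  simpa using (isBigO_refl (fun t : ℝ => t ^ n) (𝓝 (0:ℝ))).mul h1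

set_option maxHeartbeats 2000000 in
/-- For x(t) = ∫₀ᵗ cos θ, y(t) = ∫₀ᵗ sin θ with θ smooth,
x²+y² = t² - (θ̇(0)²/12)t⁴ - (θ̇(0)θ̈(0)/12)t⁵
 + (-θ̇(0)θ⃛(0)/40 - θ̈(0)²/45 + θ̇(0)⁴/360)t⁶ + O(t⁷). -/
theorem xsq_add_ysq_taylor (θ x y : ℝ → ℝ)
    (hθ : ContDiff ℝ (⊤ : ℕ∞) θ)
    (hx : ∀ t, x t = ∫ s in (0:ℝ)..t, Real.cos (θ s))
    (hy : ∀ t, y t = ∫ s in (0:ℝ)..t, Real.sin (θ s)) :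
    (fun t => x t ^ 2 + y t ^ 2 -
      (t^2 - (deriv θ 0)^2 / 12 * t^4 - deriv θ 0 * iteratedDeriv 2 θ 0 / 12 * t^5 +
        (-(deriv θ 0 * iteratedDeriv 3 θ 0) / 40 - (iteratedDeriv 2 θ 0)^2 / 45 +
          (deriv θ 0)^4 / 360) * t^6)) =O[𝓝 (0:ℝ)] (fun t => t^7) := by
  have hθ' : ContDiff ℝ ((⊤ : ℕ∞) : WithTop ℕ∞) θ := hθ.of_le (by simp)
  set C := Real.cos (θ 0) with hC
  set S := Real.sin (θ 0) with hS
  set a := deriv θ 0 with ha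
  set b := iteratedDeriv 2 θ 0 with hb
  set c := iteratedDeriv 3 θ 0 with hc
  set d := iteratedDeriv 4 θ 0 with hd
  have hpyth : S^2 + C^2 = 1 := by rw [hS, hC]; exact Real.sin_sq_add_cos_sq _
  have hEx := cos_int_taylor θ x hθ' hx C (-S*a) (-C*a^2 - S*b) (S*a^3 - 3*(C*(a*b)) - S*c)
    (C*a^4 + 6*S*a^2*b - 3*C*b^2 - 4*C*a*c - S*d) rfl rfl rfl rfl rfl
  -- shifted angle for the sine integral
  set θt : ℝ → ℝ := fun s' => θ s' - Real.pi/2 with hθtdef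
  have hθts : ContDiff ℝ ((⊤ : ℕ∞) : WithTop ℕ∞) θt := hθ'.sub contDiff_const
  have hyt : ∀ t, y t = ∫ s' in (0:ℝ)..t, Real.cos (θt s') := by
    intro t; rw [hy]; simp only [hθtdef, Real.cos_sub_pi_div_two]
  have hθtd : deriv θt = deriv θ := by
    funext s'; rw [hθtdef]; exact deriv_sub_const _
  have hcos0 : Real.cos (θt 0) = S := by simp only [hθtdef]; rw [hS]; exact Real.cos_sub_pi_div_two _
  have hsin0 : Real.sin (θt 0) = -C := by simp only [hθtdef]; rw [hC]; exact Real.sin_sub_pi_div_two _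
  have hder0 : deriv θt 0 = a := by rw [hθtd, ← ha]
  have hJ2 : iteratedDeriv 2 θt 0 = b := by
    rw [hb]; simp only [iteratedDeriv_succ, iteratedDeriv_zero, hθtd]
  have hJ3 : iteratedDeriv 3 θt 0 = c := by
    rw [hc]; simp only [iteratedDeriv_succ, iteratedDeriv_zero, hθtd]
  have hJ4 : iteratedDeriv 4 θt 0 = d := by
    rw [hd]; simp only [iteratedDeriv_succ, iteratedDeriv_zero, hθtd]
  have hEy := cos_int_taylor θt y hθts hyt S (C*a) (-S*a^2 + C*b) (-C*a^3 - 3*(S*(a*b)) + C*c)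
    (S*a^4 - 6*C*a^2*b - 3*S*b^2 - 4*S*a*c + C*d)
    (by rw [hcos0])
    (by rw [hsin0, hder0]; ring)
    (by rw [hcos0, hsin0, hder0, hJ2]; ring)
    (by rw [hcos0, hsin0, hder0, hJ2, hJ3]; ring)
    (by rw [hcos0, hsin0, hder0, hJ2, hJ3, hJ4]; ring)
  -- bounds on the polynomial parts
  have hPxO : (fun t => C * t + -S*a * t ^ 2 / 2 + (-C*a^2 - S*b) * t ^ 3 / 6 + (S*a^3 - 3*(C*(a*b)) - S*c) * t ^ 4 / 24 + (C*a^4 + 6*S*a^2*b - 3*C*b^2 - 4*C*a*c - S*d) * t ^ 5 / 120) =O[𝓝 (0:ℝ)] fun t => t ^ 1 := by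
    have heq : (fun t : ℝ => C * t + -S*a * t ^ 2 / 2 + (-C*a^2 - S*b) * t ^ 3 / 6 + (S*a^3 - 3*(C*(a*b)) - S*c) * t ^ 4 / 24 + (C*a^4 + 6*S*a^2*b - 3*C*b^2 - 4*C*a*c - S*d) * t ^ 5 / 120) = fun t => t ^ 1 * (C + -S*a * t / 2 + (-C*a^2 - S*b) * t ^ 2 / 6 + (S*a^3 - 3*(C*(a*b)) - S*c) * t ^ 3 / 24 + (C*a^4 + 6*S*a^2*b - 3*C*b^2 - 4*C*a*c - S*d) * t ^ 4 / 120) := funext fun t => by ring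
    rw [heq]
    exact mulO (by fun_prop (disch := norm_num)) 1
  have hPyO : (fun t => S * t + C*a * t ^ 2 / 2 + (-S*a^2 + C*b) * t ^ 3 / 6 + (-C*a^3 - 3*(S*(a*b)) + C*c) * t ^ 4 / 24 + (S*a^4 - 6*C*a^2*b - 3*S*b^2 - 4*S*a*c + C*d) * t ^ 5 / 120) =O[𝓝 (0:ℝ)] fun t => t ^ 1 := by
    have heq : (fun t : ℝ => S * t + C*a * t ^ 2 / 2 + (-S*a^2 + C*b) * t ^ 3 / 6 + (-C*a^3 - 3*(S*(a*b)) + C*c) * t ^ 4 / 24 + (S*a^4 - 6*C*a^2*b - 3*S*b^2 - 4*S*a*c + C*d) * t ^ 5 / 120) = fun t => t ^ 1 * (S + C*a * t / 2 + (-S*a^2 + C*b) * t ^ 2 / 6 + (-C*a^3 - 3*(S*(a*b)) + C*c) * t ^ 3 / 24 + (S*a^4 - 6*C*a^2*b - 3*S*b^2 - 4*S*a*c + C*d) * t ^ 4 / 120) := funext fun t => by ring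
    rw [heq]
    exact mulO (by fun_prop (disch := norm_num)) 1
  have hpow7 : (fun t : ℝ => t ^ 1 * t ^ 6) = fun t => t ^ 7 := funext fun t => by ring
  have hcrossx : (fun t => (C * t + -S*a * t ^ 2 / 2 + (-C*a^2 - S*b) * t ^ 3 / 6 + (S*a^3 - 3*(C*(a*b)) - S*c) * t ^ 4 / 24 + (C*a^4 + 6*S*a^2*b - 3*C*b^2 - 4*C*a*c - S*d) * t ^ 5 / 120) * (x t - (C * t + -S*a * t ^ 2 / 2 + (-C*a^2 - S*b) * t ^ 3 / 6 + (S*a^3 - 3*(C*(a*b)) - S*c) * t ^ 4 / 24 + (C*a^4 + 6*S*a^2*b - 3*C*b^2 - 4*C*a*c - S*d) * t ^ 5 / 120))) =O[𝓝 (0:ℝ)] fun t => t ^ 7 := by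
    have h := hPxO.mul hEx
    rwa [hpow7] at h
  have hcrossy : (fun t => (S * t + C*a * t ^ 2 / 2 + (-S*a^2 + C*b) * t ^ 3 / 6 + (-C*a^3 - 3*(S*(a*b)) + C*c) * t ^ 4 / 24 + (S*a^4 - 6*C*a^2*b - 3*S*b^2 - 4*S*a*c + C*d) * t ^ 5 / 120) * (y t - (S * t + C*a * t ^ 2 / 2 + (-S*a^2 + C*b) * t ^ 3 / 6 + (-C*a^3 - 3*(S*(a*b)) + C*c) * t ^ 4 / 24 + (S*a^4 - 6*C*a^2*b - 3*S*b^2 - 4*S*a*c + C*d) * t ^ 5 / 120))) =O[𝓝 (0:ℝ)] fun t => t ^ 7 := by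
    have h := hPyO.mul hEy
    rwa [hpow7] at h
  have hsqx : (fun t => (x t - (C * t + -S*a * t ^ 2 / 2 + (-C*a^2 - S*b) * t ^ 3 / 6 + (S*a^3 - 3*(C*(a*b)) - S*c) * t ^ 4 / 24 + (C*a^4 + 6*S*a^2*b - 3*C*b^2 - 4*C*a*c - S*d) * t ^ 5 / 120)) * (x t - (C * t + -S*a * t ^ 2 / 2 + (-C*a^2 - S*b) * t ^ 3 / 6 + (S*a^3 - 3*(C*(a*b)) - S*c) * t ^ 4 / 24 + (C*a^4 + 6*S*a^2*b - 3*C*b^2 - 4*C*a*c - S*d) * t ^ 5 / 120))) =O[𝓝 (0:ℝ)] fun t => t ^ 7 := by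
    have h := hEx.mul hEx
    rw [show (fun t : ℝ => t^6 * t^6) = fun t => t^7 * t^5 from funext fun t => by ring] at h
    exact h.trans (mulO (continuous_pow 5) 7)
  have hsqy : (fun t => (y t - (S * t + C*a * t ^ 2 / 2 + (-S*a^2 + C*b) * t ^ 3 / 6 + (-C*a^3 - 3*(S*(a*b)) + C*c) * t ^ 4 / 24 + (S*a^4 - 6*C*a^2*b - 3*S*b^2 - 4*S*a*c + C*d) * t ^ 5 / 120)) * (y t - (S * t + C*a * t ^ 2 / 2 + (-S*a^2 + C*b) * t ^ 3 / 6 + (-C*a^3 - 3*(S*(a*b)) + C*c) * t ^ 4 / 24 + (S*a^4 - 6*C*a^2*b - 3*S*b^2 - 4*S*a*c + C*d) * t ^ 5 / 120))) =O[𝓝 (0:ℝ)] fun t => t ^ 7 := by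
    have h := hEy.mul hEy
    rw [show (fun t : ℝ => t^6 * t^6) = fun t => t^7 * t^5 from funext fun t => by ring] at h
    exact h.trans (mulO (continuous_pow 5) 7)
  have hmain : (fun t : ℝ => t ^ 7 * (d^2*t^3/14400 + c*d*t^2/1440 + c^2*t/576 + b*d*t/360 + b*c/72 + b^4*t^3/1600 + a*d/120 + a*b^2*c*t^3/600 + a*b^3*t^2/160 + a^2*c^2*t^3/900 - a^2*b*d*t^3/1200 + a^2*b*c*t^2/240 + 7*a^2*b^2*t/960 - a^3*d*t^2/1440 + 11*a^3*c*t/1440 - a^3*b/45 + a^4*b^2*t^3/480 - a^5*c*t^3/1800 + a^5*b*t^2/480 - a^6*t/960 + a^8*t^3/14400)) =O[𝓝 (0:ℝ)] fun t => t ^ 7 :=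
    mulO (by fun_prop (disch := norm_num)) 7
  have hdecomp : (fun t => x t ^ 2 + y t ^ 2 -
      (t^2 - a^2 / 12 * t^4 - a * b / 12 * t^5 + (-(a * c) / 40 - b^2 / 45 + a^4 / 360) * t^6))
      = fun t => t ^ 7 * (d^2*t^3/14400 + c*d*t^2/1440 + c^2*t/576 + b*d*t/360 + b*c/72 + b^4*t^3/1600 + a*d/120 + a*b^2*c*t^3/600 + a*b^3*t^2/160 + a^2*c^2*t^3/900 - a^2*b*d*t^3/1200 + a^2*b*c*t^2/240 + 7*a^2*b^2*t/960 - a^3*d*t^2/1440 + 11*a^3*c*t/1440 - a^3*b/45 + a^4*b^2*t^3/480 - a^5*c*t^3/1800 + a^5*b*t^2/480 - a^6*t/960 + a^8*t^3/14400)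
        + 2 * ((C * t + -S*a * t ^ 2 / 2 + (-C*a^2 - S*b) * t ^ 3 / 6 + (S*a^3 - 3*(C*(a*b)) - S*c) * t ^ 4 / 24 + (C*a^4 + 6*S*a^2*b - 3*C*b^2 - 4*C*a*c - S*d) * t ^ 5 / 120) * (x t - (C * t + -S*a * t ^ 2 / 2 + (-C*a^2 - S*b) * t ^ 3 / 6 + (S*a^3 - 3*(C*(a*b)) - S*c) * t ^ 4 / 24 + (C*a^4 + 6*S*a^2*b - 3*C*b^2 - 4*C*a*c - S*d) * t ^ 5 / 120)))
        + (x t - (C * t + -S*a * t ^ 2 / 2 + (-C*a^2 - S*b) * t ^ 3 / 6 + (S*a^3 - 3*(C*(a*b)) - S*c) * t ^ 4 / 24 + (C*a^4 + 6*S*a^2*b - 3*C*b^2 - 4*C*a*c - S*d) * t ^ 5 / 120)) * (x t - (C * t + -S*a * t ^ 2 / 2 + (-C*a^2 - S*b) * t ^ 3 / 6 + (S*a^3 - 3*(C*(a*b)) - S*c) * t ^ 4 / 24 + (C*a^4 + 6*S*a^2*b - 3*C*b^2 - 4*C*a*c - S*d) * t ^ 5 / 120))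
        + 2 * ((S * t + C*a * t ^ 2 / 2 + (-S*a^2 + C*b) * t ^ 3 / 6 + (-C*a^3 - 3*(S*(a*b)) + C*c) * t ^ 4 / 24 + (S*a^4 - 6*C*a^2*b - 3*S*b^2 - 4*S*a*c + C*d) * t ^ 5 / 120) * (y t - (S * t + C*a * t ^ 2 / 2 + (-S*a^2 + C*b) * t ^ 3 / 6 + (-C*a^3 - 3*(S*(a*b)) + C*c) * t ^ 4 / 24 + (S*a^4 - 6*C*a^2*b - 3*S*b^2 - 4*S*a*c + C*d) * t ^ 5 / 120)))
        + (y t - (S * t + C*a * t ^ 2 / 2 + (-S*a^2 + C*b) * t ^ 3 / 6 + (-C*a^3 - 3*(S*(a*b)) + C*c) * t ^ 4 / 24 + (S*a^4 - 6*C*a^2*b - 3*S*b^2 - 4*S*a*c + C*d) * t ^ 5 / 120)) * (y t - (S * t + C*a * t ^ 2 / 2 + (-S*a^2 + C*b) * t ^ 3 / 6 + (-C*a^3 - 3*(S*(a*b)) + C*c) * t ^ 4 / 24 + (S*a^4 - 6*C*a^2*b - 3*S*b^2 - 4*S*a*c + C*d) * t ^ 5 / 120)) := by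
    funext t
    linear_combination ((t^2 - a^2/12*t^4 - a*b/12*t^5 + (-(a*c)/40 - b^2/45 + a^4/360)*t^6) + t^7 * (d^2*t^3/14400 + c*d*t^2/1440 + c^2*t/576 + b*d*t/360 + b*c/72 + b^4*t^3/1600 + a*d/120 + a*b^2*c*t^3/600 + a*b^3*t^2/160 + a^2*c^2*t^3/900 - a^2*b*d*t^3/1200 + a^2*b*c*t^2/240 + 7*a^2*b^2*t/960 - a^3*d*t^2/1440 + 11*a^3*c*t/1440 - a^3*b/45 + a^4*b^2*t^3/480 - a^5*c*t^3/1800 + a^5*b*t^2/480 - a^6*t/960 + a^8*t^3/14400)) * hpyth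
  rw [hdecomp]
  exact ((((hmain.add (hcrossx.const_mul_left 2)).add hsqx).add
    (hcrossy.const_mul_left 2)).add hsqy)
end

section
/- For any smooth function θ, setting x(t) = ∫₀ᵗ cos θ, y(t) = ∫₀ᵗ sin θ, z(t) = ∫₀ᵗ (xẏ - yẋ)/2, and n ≥ 3, one has dⁿ/dtⁿ (x² + y²) = -4 Σᵢ₌₀^{n-2} C(n-2, i) θ^(i+1) z^(n-i-1), where C denotes binomial coefficients. -/
open Filter
open scoped ContDiff

private lemma one_le_inf : (∞ : WithTop ℕ∞) ≠ 0 := by simp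

private lemma ideriv_add {f g : ℝ → ℝ} {n : ℕ} (hf : ContDiff ℝ ∞ f) (hg : ContDiff ℝ ∞ g)
    (x : ℝ) :
    iteratedDeriv n (fun t => f t + g t) x = iteratedDeriv n f x + iteratedDeriv n g x := by
  rw [← iteratedDerivWithin_univ, ← iteratedDerivWithin_univ, ← iteratedDerivWithin_univ]
  exact iteratedDerivWithin_add (Set.mem_univ x) uniqueDiffOn_univ
    ((hf.of_le (by exact_mod_cast le_top) : ContDiff ℝ n f).contDiffWithinAt) ((hg.of_le (by exact_mod_cast le_top) : ContDiff ℝ n g).contDiffWithinAt)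

private lemma ideriv_const_mul {f : ℝ → ℝ} {n : ℕ} (hf : ContDiff ℝ ∞ f) (c : ℝ) (x : ℝ) :
    iteratedDeriv n (fun t => c * f t) x = c * iteratedDeriv n f x := by
  rw [← iteratedDerivWithin_univ, ← iteratedDerivWithin_univ]
  exact iteratedDerivWithin_const_mul (Set.mem_univ x) uniqueDiffOn_univ c
    ((hf.of_le (by exact_mod_cast le_top) : ContDiff ℝ n f).contDiffWithinAt)

private lemma sum_pascal (F G : ℕ → ℝ) (m : ℕ) :
    ∑ i ∈ Finset.range (m+1), (m.choose i : ℝ) * F (i+1) * G (m-i)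
      + ∑ i ∈ Finset.range (m+1), (m.choose i : ℝ) * F i * G (m-i+1)
    = ∑ i ∈ Finset.range (m+2), ((m+1).choose i : ℝ) * F i * G (m+1-i) := by
  rw [Finset.sum_range_succ' (fun i => ((m+1).choose i : ℝ) * F i * G (m+1-i)) (m+1)]
  have e1 : ∀ i ∈ Finset.range (m+1),
      ((m+1).choose (i+1) : ℝ) * F (i+1) * G (m+1-(i+1))
      = (m.choose i : ℝ) * F (i+1) * G (m-i) + (m.choose (i+1) : ℝ) * F (i+1) * G (m-i) := by
    intro i _
    rw [Nat.succ_sub_succ, Nat.choose_succ_succ]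
    push_cast; ring
  rw [Finset.sum_congr rfl e1, Finset.sum_add_distrib]
  have e2 : ∑ i ∈ Finset.range (m+1), (m.choose i : ℝ) * F i * G (m-i+1)
      = (∑ i ∈ Finset.range (m+1), (m.choose (i+1) : ℝ) * F (i+1) * G (m-i))
        + ((m+1).choose 0 : ℝ) * F 0 * G (m+1-0) := by
    rw [Finset.sum_range_succ' (fun i => (m.choose i : ℝ) * F i * G (m-i+1)) m,
      Finset.sum_range_succ (fun i => (m.choose (i+1) : ℝ) * F (i+1) * G (m-i)) m]
    simp only [Nat.choose_succ_self, Nat.cast_zero, zero_mul, mul_zero, add_zero,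
      Nat.choose_zero_right, Nat.cast_one, one_mul, Nat.sub_zero, Nat.sub_self]
    congr 1
    refine Finset.sum_congr rfl fun i hi => ?_
    have h : m - (i+1) + 1 = m - i := by
      have := Finset.mem_range.mp hi; omega
    rw [h]
  rw [e2]; ring

private lemma leibniz (m : ℕ) : ∀ (f g : ℝ → ℝ), ContDiff ℝ ∞ f → ContDiff ℝ ∞ g → ∀ t : ℝ,
    iteratedDeriv m (fun s => f s * g s) t
      = ∑ i ∈ Finset.range (m + 1),
          (m.choose i : ℝ) * iteratedDeriv i f t * iteratedDeriv (m - i) g t := by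
  induction m with
  | zero => intro f g _ _ t; simp
  | succ m ih =>
    intro f g hf hg t
    have hf' : ContDiff ℝ ∞ (deriv f) := (contDiff_infty_iff_deriv.mp hf).2
    have hg' : ContDiff ℝ ∞ (deriv g) := (contDiff_infty_iff_deriv.mp hg).2
    rw [iteratedDeriv_succ']
    have hd : deriv (fun s => f s * g s)
        = fun s => deriv f s * g s + f s * deriv g s := by
      funext s
      exact deriv_fun_mul ((hf.differentiable one_le_inf) s) ((hg.differentiable one_le_inf) s)
    have step : iteratedDeriv m (fun s => deriv f s * g s + f s * deriv g s) t
        = iteratedDeriv m (fun s => deriv f s * g s) t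
          + iteratedDeriv m (fun s => f s * deriv g s) t :=
      ideriv_add (hf'.mul hg) (hf.mul hg') t
    rw [hd, step, ih (deriv f) g hf' hg t, ih f (deriv g) hf hg' t]
    have key := sum_pascal (fun i => iteratedDeriv i f t) (fun j => iteratedDeriv j g t) m
    simp only [iteratedDeriv_succ'] at key
    convert key using 2

private lemma ideriv_zero (j : ℕ) : iteratedDeriv j (fun _ : ℝ => (0:ℝ)) = fun _ => 0 := by
  induction j with
  | zero => funext s; simp
  | succ j ih => rw [iteratedDeriv_succ, ih]; funext s; simp

private lemma smooth_primitive {g : ℝ → ℝ} (hg : ContDiff ℝ ∞ g) {x : ℝ → ℝ}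
    (hx : ∀ t, x t = ∫ s in (0:ℝ)..t, g s) : ContDiff ℝ ∞ x ∧ deriv x = g := by
  have hxe : x = fun t => ∫ s in (0:ℝ)..t, g s := funext hx
  have hd : ∀ t, HasDerivAt x (g t) t := by
    intro t
    rw [hxe]
    exact (hg.continuous.integral_hasStrictDerivAt 0 t).hasDerivAt
  have hdx : deriv x = g := funext fun t => (hd t).deriv
  exact ⟨contDiff_infty_iff_deriv.mpr ⟨fun t => (hd t).differentiableAt, hdx ▸ hg⟩, hdx⟩

/-- For the standard arc-length horizontal curve setup from the origin and n ≥ 3,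
dⁿ/dtⁿ (x² + y²) = -4 Σ_{i=0}^{n-2} C(n-2,i) θ^(i+1) z^(n-i-1). -/
theorem nth_deriv_xsq_add_ysq (θ x y z : ℝ → ℝ)
    (hθ : ContDiff ℝ (⊤ : ℕ∞) θ)
    (hx : ∀ t, x t = ∫ s in (0:ℝ)..t, Real.cos (θ s))
    (hy : ∀ t, y t = ∫ s in (0:ℝ)..t, Real.sin (θ s))
    (hz : ∀ t, z t = ∫ s in (0:ℝ)..t, (x s * deriv y s - y s * deriv x s) / 2) :
    ∀ n : ℕ, 3 ≤ n → ∀ t : ℝ,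
      iteratedDeriv n (fun s => x s ^ 2 + y s ^ 2) t =
        -4 * ∑ i ∈ Finset.range (n - 1),
          ((n - 2).choose i : ℝ) * iteratedDeriv (i + 1) θ t
            * iteratedDeriv (n - i - 1) z t := by
  have hθ : ContDiff ℝ ∞ θ := hθ.of_le (by simp)
  have hcos : ContDiff ℝ ∞ (fun s => Real.cos (θ s)) := Real.contDiff_cos.comp hθ
  have hsin : ContDiff ℝ ∞ (fun s => Real.sin (θ s)) := Real.contDiff_sin.comp hθ
  obtain ⟨hxC, hdx⟩ := smooth_primitive hcos hx
  obtain ⟨hyC, hdy⟩ := smooth_primitive hsin hy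
  have hwC : ContDiff ℝ ∞ (fun s => (x s * deriv y s - y s * deriv x s) / 2) := by
    rw [hdx, hdy]
    exact ((hxC.mul hsin).sub (hyC.mul hcos)).div_const 2
  obtain ⟨hzC, hdz⟩ := smooth_primitive hwC hz
  have hθ' : ContDiff ℝ ∞ (deriv θ) := (contDiff_infty_iff_deriv.mp hθ).2
  have hz' : ContDiff ℝ ∞ (deriv z) := (contDiff_infty_iff_deriv.mp hzC).2
  have hθd : ∀ t, HasDerivAt θ (deriv θ t) t :=
    fun t => ((hθ.differentiable one_le_inf) t).hasDerivAt
  have hxd : ∀ t, HasDerivAt x (Real.cos (θ t)) t := by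
    intro t
    have := ((hxC.differentiable one_le_inf) t).hasDerivAt
    rwa [hdx] at this
  have hyd : ∀ t, HasDerivAt y (Real.sin (θ t)) t := by
    intro t
    have := ((hyC.differentiable one_le_inf) t).hasDerivAt
    rwa [hdy] at this
  -- first derivative of x² + y²
  have hf1 : deriv (fun s => x s ^ 2 + y s ^ 2)
      = fun t => 2 * x t * Real.cos (θ t) + 2 * y t * Real.sin (θ t) := by
    funext t
    have h := (((hxd t).fun_pow 2).fun_add ((hyd t).fun_pow 2)).deriv
    rw [h]; ring
  -- second derivative
  have hf2 : deriv (deriv (fun s => x s ^ 2 + y s ^ 2))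
      = fun t => 2 + (-4) * (deriv θ t * deriv z t) := by
    funext t
    rw [hf1]
    have h1 : HasDerivAt (fun t => 2 * x t * Real.cos (θ t) + 2 * y t * Real.sin (θ t))
        ((2 * Real.cos (θ t)) * Real.cos (θ t)
          + (2 * x t) * (-Real.sin (θ t) * deriv θ t)
          + ((2 * Real.sin (θ t)) * Real.sin (θ t)
            + (2 * y t) * (Real.cos (θ t) * deriv θ t))) t := by
      have hA := (((hxd t).const_mul (2:ℝ)).mul ((hθd t).cos))
      have hB := (((hyd t).const_mul (2:ℝ)).mul ((hθd t).sin))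
      exact hA.add hB
    rw [h1.deriv, hdz]
    have hpy : Real.sin (θ t) ^ 2 + Real.cos (θ t) ^ 2 = 1 := Real.sin_sq_add_cos_sq (θ t)
    simp only [hdx, hdy]
    nlinarith [hpy]
  intro n hn t
  obtain ⟨k, rfl⟩ : ∃ k, n = k + 2 := ⟨n - 2, by omega⟩
  have hk : 1 ≤ k := by omega
  rw [show k + 2 = (k + 1) + 1 from rfl, iteratedDeriv_succ', iteratedDeriv_succ', hf2]
  have hprod : ContDiff ℝ ∞ (fun s => deriv θ s * deriv z s) := hθ'.mul hz'
  have hconst : ContDiff ℝ ∞ (fun _ : ℝ => (2:ℝ)) := contDiff_const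
  have hprod4 : ContDiff ℝ ∞ (fun s => (-4:ℝ) * (deriv θ s * deriv z s)) :=
    contDiff_const.mul hprod
  have step1 : iteratedDeriv k (fun s => 2 + (-4) * (deriv θ s * deriv z s)) t
      = iteratedDeriv k (fun _ : ℝ => (2:ℝ)) t
        + iteratedDeriv k (fun s => (-4:ℝ) * (deriv θ s * deriv z s)) t :=
    ideriv_add contDiff_const hprod4 t
  have step2 : iteratedDeriv k (fun s => (-4:ℝ) * (deriv θ s * deriv z s)) t
      = (-4) * iteratedDeriv k (fun s => deriv θ s * deriv z s) t :=
    ideriv_const_mul hprod (-4) t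
  have hc0 : iteratedDeriv k (fun _ : ℝ => (2:ℝ)) t = 0 := by
    obtain ⟨j, rfl⟩ := Nat.exists_eq_succ_of_ne_zero (by omega : k ≠ 0)
    rw [iteratedDeriv_succ']
    have hd2 : deriv (fun _ : ℝ => (2:ℝ)) = fun _ : ℝ => (0:ℝ) := by
      funext s; simp
    rw [hd2, ideriv_zero]
  rw [step1, step2, hc0, zero_add, leibniz k (deriv θ) (deriv z) hθ' hz' t]
  have e1 : k + 2 - 1 = k + 1 := by omega
  have e2 : k + 2 - 2 = k := by omega
  simp only [e1, e2]
  congr 1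
  refine Finset.sum_congr rfl fun i hi => ?_
  have hik : i ≤ k := by have := Finset.mem_range.mp hi; omega
  have e3 : k + 2 - i - 1 = (k - i) + 1 := by omega
  rw [e3, iteratedDeriv_succ', iteratedDeriv_succ']
end

section
/- If ζ₁, ζ₂ : (-T,T) → ℍ are two smooth horizontal curves parametrized by arc length with h_{ζ₁}(t) = h_{ζ₂}(t) for all t, then there is an isometry ι of the Heisenberg group (a composition of a left translation and a rotation about the z-axis) such that ζ₂ = ι ∘ ζ₁. -/
open Filter

/-- Heisenberg group multiplication on ℝ³. -/
noncomputable def Hmul (u v : ℝ × ℝ × ℝ) : ℝ × ℝ × ℝ :=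
  (u.1 + v.1, u.2.1 + v.2.1, u.2.2 + v.2.2 + (u.1 * v.2.1 - u.2.1 * v.1) / 2)

/-- Rotation about the z-axis in the Heisenberg group. -/
noncomputable def Rot (α : ℝ) (p : ℝ × ℝ × ℝ) : ℝ × ℝ × ℝ :=
  (p.1 * Real.cos α + p.2.1 * Real.sin α, -p.1 * Real.sin α + p.2.1 * Real.cos α, p.2.2)

/-- Two differentiable real functions with equal derivatives on an open interval
containing `0` and equal values at `0` agree on that interval. -/
lemma eqOn_of_deriv_eq_aux {a b : ℝ} {f g : ℝ → ℝ} (hf : Differentiable ℝ f)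
    (hg : Differentiable ℝ g) (hmem : (0:ℝ) ∈ Set.Ioo a b)
    (hd : ∀ t ∈ Set.Ioo a b, deriv f t = deriv g t) (h0 : f 0 = g 0) :
    Set.EqOn f g (Set.Ioo a b) := by
  apply Convex.eqOn_of_fderivWithin_eq (convex_Ioo a b) hf.differentiableOn hg.differentiableOn
    isOpen_Ioo.uniqueDiffOn _ hmem h0
  intro t ht
  rw [fderivWithin_of_isOpen isOpen_Ioo ht, fderivWithin_of_isOpen isOpen_Ioo ht,
    (hf t).hasDerivAt.hasFDerivAt.fderiv, (hg t).hasDerivAt.hasFDerivAt.fderiv, hd t ht]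

/-- If two smooth horizontal curves parametrized by arc length on (-T,T) have the
same characteristic deviation h_ζ = θ̇, then they agree up to an isometry of the
Heisenberg group (a composition of a left translation and a rotation). -/
theorem curves_equal_up_to_isometry (T : ℝ) (hT : 0 < T)
    (θ₁ x₁ y₁ z₁ θ₂ x₂ y₂ z₂ : ℝ → ℝ)
    (hθ₁ : ContDiff ℝ (⊤ : ℕ∞) θ₁) (hθ₂ : ContDiff ℝ (⊤ : ℕ∞) θ₂)
    (hx₁s : ContDiff ℝ (⊤ : ℕ∞) x₁) (hy₁s : ContDiff ℝ (⊤ : ℕ∞) y₁) (hz₁s : ContDiff ℝ (⊤ : ℕ∞) z₁)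
    (hx₂s : ContDiff ℝ (⊤ : ℕ∞) x₂) (hy₂s : ContDiff ℝ (⊤ : ℕ∞) y₂) (hz₂s : ContDiff ℝ (⊤ : ℕ∞) z₂)
    (hx₁' : ∀ t ∈ Set.Ioo (-T) T, deriv x₁ t = Real.cos (θ₁ t))
    (hy₁' : ∀ t ∈ Set.Ioo (-T) T, deriv y₁ t = Real.sin (θ₁ t))
    (hz₁' : ∀ t ∈ Set.Ioo (-T) T,
      deriv z₁ t = (x₁ t * deriv y₁ t - y₁ t * deriv x₁ t) / 2)
    (hx₂' : ∀ t ∈ Set.Ioo (-T) T, deriv x₂ t = Real.cos (θ₂ t))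
    (hy₂' : ∀ t ∈ Set.Ioo (-T) T, deriv y₂ t = Real.sin (θ₂ t))
    (hz₂' : ∀ t ∈ Set.Ioo (-T) T,
      deriv z₂ t = (x₂ t * deriv y₂ t - y₂ t * deriv x₂ t) / 2)
    (hdev : ∀ t ∈ Set.Ioo (-T) T, deriv θ₁ t = deriv θ₂ t) :
    ∃ u : ℝ × ℝ × ℝ, ∃ α : ℝ, ∀ t ∈ Set.Ioo (-T) T,
      (x₂ t, y₂ t, z₂ t) = Hmul u (Rot α (x₁ t, y₁ t, z₁ t)) := by
  have h0mem : (0:ℝ) ∈ Set.Ioo (-T) T := ⟨by linarith, hT⟩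
  have dθ₁ := hθ₁.differentiable (by simp)
  have dθ₂ := hθ₂.differentiable (by simp)
  have dx₁ := hx₁s.differentiable (by simp)
  have dy₁ := hy₁s.differentiable (by simp)
  have dz₁ := hz₁s.differentiable (by simp)
  have dx₂ := hx₂s.differentiable (by simp)
  have dy₂ := hy₂s.differentiable (by simp)
  have dz₂ := hz₂s.differentiable (by simp)
  set α : ℝ := θ₁ 0 - θ₂ 0 with hα
  set ca : ℝ := Real.cos α
  set sa : ℝ := Real.sin α
  -- θ₂ = θ₁ - α on the interval
  have hθeq : Set.EqOn θ₂ (fun t => θ₁ t - α) (Set.Ioo (-T) T) := by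
    apply eqOn_of_deriv_eq_aux dθ₂ (dθ₁.sub_const α) h0mem _ (by simp [hα])
    intro t ht
    have : HasDerivAt (fun t => θ₁ t - α) (deriv θ₁ t) t := (dθ₁ t).hasDerivAt.sub_const α
    rw [this.deriv, hdev t ht]
  -- abbreviations for the rotated first curve
  set X : ℝ → ℝ := fun t => x₁ t * ca + y₁ t * sa with hX
  set Y : ℝ → ℝ := fun t => -(x₁ t) * sa + y₁ t * ca with hY
  have dX : Differentiable ℝ X := (dx₁.mul_const ca).add (dy₁.mul_const sa)
  have dY : Differentiable ℝ Y := (dx₁.neg.mul_const sa).add (dy₁.mul_const ca)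
  have hXd : ∀ t, HasDerivAt X (deriv x₁ t * ca + deriv y₁ t * sa) t := fun t =>
    ((dx₁ t).hasDerivAt.mul_const ca).add ((dy₁ t).hasDerivAt.mul_const sa)
  have hYd : ∀ t, HasDerivAt Y (-(deriv x₁ t) * sa + deriv y₁ t * ca) t := fun t =>
    (((dx₁ t).hasDerivAt.neg.mul_const sa).add ((dy₁ t).hasDerivAt.mul_const ca))
  -- the derivatives of X, Y on the interval are cos θ₂, sin θ₂
  have hXd' : ∀ t ∈ Set.Ioo (-T) T, deriv X t = Real.cos (θ₂ t) := by
    intro t ht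
    rw [(hXd t).deriv, hx₁' t ht, hy₁' t ht, hθeq ht, Real.cos_sub]
  have hYd' : ∀ t ∈ Set.Ioo (-T) T, deriv Y t = Real.sin (θ₂ t) := by
    intro t ht
    rw [(hYd t).deriv, hx₁' t ht, hy₁' t ht, hθeq ht, Real.sin_sub]
    ring
  set a : ℝ := x₂ 0 - X 0 with ha
  set b : ℝ := y₂ 0 - Y 0 with hb
  set c : ℝ := z₂ 0 - z₁ 0 - (a * Y 0 - b * X 0) / 2 with hc
  -- first coordinate
  have hxeq : Set.EqOn x₂ (fun t => a + X t) (Set.Ioo (-T) T) := by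
    apply eqOn_of_deriv_eq_aux dx₂ (dX.const_add a) h0mem _ (by simp [ha])
    intro t ht
    have : HasDerivAt (fun t => a + X t) (deriv X t) t := ((dX t).hasDerivAt).const_add a
    rw [this.deriv, hXd' t ht, hx₂' t ht]
  -- second coordinate
  have hyeq : Set.EqOn y₂ (fun t => b + Y t) (Set.Ioo (-T) T) := by
    apply eqOn_of_deriv_eq_aux dy₂ (dY.const_add b) h0mem _ (by simp [hb])
    intro t ht
    have : HasDerivAt (fun t => b + Y t) (deriv Y t) t := ((dY t).hasDerivAt).const_add b
    rw [this.deriv, hYd' t ht, hy₂' t ht]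
  -- third coordinate
  have hzeq : Set.EqOn z₂ (fun t => c + z₁ t + (a * Y t - b * X t) / 2) (Set.Ioo (-T) T) := by
    have dG : Differentiable ℝ (fun t => c + z₁ t + (a * Y t - b * X t) / 2) :=
      ((dz₁.const_add c).add (((dY.const_mul a).sub (dX.const_mul b)).div_const 2))
    apply eqOn_of_deriv_eq_aux dz₂ dG h0mem _ (by simp [hc]; ring)
    intro t ht
    have hG : HasDerivAt (fun t => c + z₁ t + (a * Y t - b * X t) / 2)
        (deriv z₁ t + (a * deriv Y t - b * deriv X t) / 2) t := by
      exact (((dz₁ t).hasDerivAt.const_add c).add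
        ((((dY t).hasDerivAt.const_mul a).sub ((dX t).hasDerivAt.const_mul b)).div_const 2))
    rw [hG.deriv, hz₂' t ht, hz₁' t ht, hxeq ht, hyeq ht]
    have hx₂d : deriv x₂ t = deriv X t := by rw [hXd' t ht, hx₂' t ht]
    have hy₂d : deriv y₂ t = deriv Y t := by rw [hYd' t ht, hy₂' t ht]
    rw [hx₂d, hy₂d, (hXd t).deriv, (hYd t).deriv]
    have hpyth : ca ^ 2 + sa ^ 2 = 1 := Real.cos_sq_add_sin_sq α
    simp only [hX, hY]
    linear_combination ((x₁ t * deriv y₁ t - y₁ t * deriv x₁ t) / 2) * hpyth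
  refine ⟨(a, b, c), α, fun t ht => ?_⟩
  have h1 := hxeq ht
  have h2 := hyeq ht
  have h3 := hzeq ht
  simp only at h1 h2 h3
  have key : Hmul (a, b, c) (Rot α (x₁ t, y₁ t, z₁ t))
      = (a + X t, b + Y t, c + z₁ t + (a * Y t - b * X t) / 2) := by
    simp only [Hmul, Rot, hX, hY, Prod.mk.injEq]
    exact ⟨rfl, rfl, rfl⟩
  rw [h1, h2, h3]
  exact key.symm
end

section
/- A smooth horizontal curve ζ parametrized by arc length in the Heisenberg group is a geodesic if and only if its characteristic deviation h_ζ(t) = θ̇(t) is constant (equivalently, its geodesic curvature k_ζ = ḣ_ζ is identically zero). -/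
open Filter Topology

/-- The unit-speed geodesic of the Heisenberg group leaving from the origin with
parameters ω, θ₀. -/
noncomputable def geo (ω θ₀ t : ℝ) : ℝ × ℝ × ℝ :=
  if ω = 0 then (t * Real.cos θ₀, t * Real.sin θ₀, 0)
  else ((Real.sin (ω*t + θ₀) - Real.sin θ₀) / ω,
        (Real.cos θ₀ - Real.cos (ω*t + θ₀)) / ω,
        (ω*t - Real.sin (ω*t)) / (2*ω^2))

lemma hd_lin (ω θ₀ t : ℝ) : HasDerivAt (fun s => ω*s + θ₀) ω t := by
  simpa using ((hasDerivAt_id t).const_mul ω).add_const θ₀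

lemma hd_geo1 (ω θ₀ t : ℝ) : HasDerivAt (fun s => (geo ω θ₀ s).1) (Real.cos (ω*t + θ₀)) t := by
  rcases eq_or_ne ω 0 with h | h
  · subst h
    simp only [geo, if_pos rfl, zero_mul, zero_add]
    simpa using (hasDerivAt_id t).mul_const (Real.cos θ₀)
  · simp only [geo, if_neg h]
    have h1 : HasDerivAt (fun s => Real.sin (ω*s + θ₀)) (Real.cos (ω*t + θ₀) * ω) t :=
      (hd_lin ω θ₀ t).sin
    have h2 := (h1.sub_const (Real.sin θ₀)).div_const ω
    refine h2.congr_deriv ?_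
    field_simp

lemma hd_geo2 (ω θ₀ t : ℝ) : HasDerivAt (fun s => (geo ω θ₀ s).2.1) (Real.sin (ω*t + θ₀)) t := by
  rcases eq_or_ne ω 0 with h | h
  · subst h
    simp only [geo, if_pos rfl, zero_mul, zero_add]
    simpa using (hasDerivAt_id t).mul_const (Real.sin θ₀)
  · simp only [geo, if_neg h]
    have h1 : HasDerivAt (fun s => Real.cos (ω*s + θ₀)) (-Real.sin (ω*t + θ₀) * ω) t :=
      (hd_lin ω θ₀ t).cos
    have h2 := (h1.const_sub (Real.cos θ₀)).div_const ω
    refine h2.congr_deriv ?_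
    field_simp

lemma hd_geo3 (ω θ₀ t : ℝ) : HasDerivAt (fun s => (geo ω θ₀ s).2.2)
    (((geo ω θ₀ t).1 * Real.sin (ω*t + θ₀) - (geo ω θ₀ t).2.1 * Real.cos (ω*t + θ₀)) / 2) t := by
  rcases eq_or_ne ω 0 with h | h
  · subst h
    norm_num [geo]
    refine (hasDerivAt_const t (0:ℝ)).congr_deriv ?_
    norm_num [geo]
    ring
  · simp only [geo, if_neg h]
    have h1 : HasDerivAt (fun s => Real.sin (ω*s)) (Real.cos (ω*t) * ω) t :=
      (Real.hasDerivAt_sin (ω*t)).comp t (by simpa using (hasDerivAt_id t).const_mul ω)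
    have h2 : HasDerivAt (fun s => ω*s - Real.sin (ω*s)) (ω - Real.cos (ω*t) * ω) t :=
      (by simpa using (hasDerivAt_id t).const_mul ω : HasDerivAt (fun s => ω*s) ω t).sub h1
    have h3 := h2.div_const (2*ω^2)
    refine h3.congr_deriv ?_
    have hc : Real.cos (ω*t) = Real.cos (ω*t + θ₀) * Real.cos θ₀ + Real.sin (ω*t + θ₀) * Real.sin θ₀ := by
      have := Real.cos_sub (ω*t + θ₀) θ₀
      rw [show ω*t + θ₀ - θ₀ = ω*t by ring] at this
      exact this
    have hp := Real.sin_sq_add_cos_sq (ω*t + θ₀)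
    field_simp
    nlinarith [hp, hc]

lemma geo_zero (ω θ₀ : ℝ) : geo ω θ₀ 0 = (0, 0, 0) := by
  simp [geo, mul_zero, zero_add]

lemma aux_eqOn {T : ℝ} (hT : 0 < T) {f g : ℝ → ℝ} (hf : Differentiable ℝ f)
    (hg : Differentiable ℝ g) (hd : ∀ t ∈ Set.Ioo (-T) T, deriv f t = deriv g t)
    (h0 : f 0 = g 0) : ∀ t ∈ Set.Ioo (-T) T, f t = g t := by
  intro t ht
  have h0m : (0:ℝ) ∈ Set.Ioo (-T) T := ⟨by linarith, hT⟩
  have key : (f - g) t = (f - g) 0 := by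
    apply (convex_Ioo (-T) T).is_const_of_fderivWithin_eq_zero
      ((hf.sub hg).differentiableOn) ?_ ht h0m
    intro s hs
    rw [fderivWithin_of_isOpen isOpen_Ioo hs]
    have hds : HasDerivAt (f - g) 0 s := by
      have := ((hf s).hasDerivAt.sub (hg s).hasDerivAt)
      rw [hd s hs] at this
      simpa using this
    have h2 : fderiv ℝ (f - g) s = 0 := by
      rw [hds.hasFDerivAt.fderiv]
      ext
      simp
    exact h2
  have := key
  simp only [Pi.sub_apply] at this
  linarith [this, h0]

-- θ' = ω from cos/sin identities
lemma theta_deriv {T ω θ₀ : ℝ} {θ : ℝ → ℝ} (hθ : ContDiff ℝ (⊤ : ℕ∞) θ)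
    (hc : ∀ t ∈ Set.Ioo (-T) T, Real.cos (θ t) = Real.cos (ω*t + θ₀))
    (hs : ∀ t ∈ Set.Ioo (-T) T, Real.sin (θ t) = Real.sin (ω*t + θ₀)) :
    ∀ t ∈ Set.Ioo (-T) T, deriv θ t = ω := by
  intro t ht
  have hθd : HasDerivAt θ (deriv θ t) t := (hθ.differentiable (by simp) t).hasDerivAt
  have hmem := isOpen_Ioo.mem_nhds ht
  -- cos ∘ θ vs cos ∘ lin
  have e1 : deriv (fun s => Real.cos (θ s)) t = deriv (fun s => Real.cos (ω*s + θ₀)) t :=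
    Filter.EventuallyEq.deriv_eq (eventuallyEq_of_mem hmem (fun s hs' => by rw [hc s hs']))
  have e2 : deriv (fun s => Real.sin (θ s)) t = deriv (fun s => Real.sin (ω*s + θ₀)) t :=
    Filter.EventuallyEq.deriv_eq (eventuallyEq_of_mem hmem (fun s hs' => by rw [hs s hs']))
  have d1 : deriv (fun s => Real.cos (θ s)) t = -Real.sin (θ t) * deriv θ t :=
    ((Real.hasDerivAt_cos (θ t)).comp t hθd).deriv
  have d2 : deriv (fun s => Real.cos (ω*s + θ₀)) t = -Real.sin (ω*t + θ₀) * ω :=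
    (hd_lin ω θ₀ t).cos.deriv
  have d3 : deriv (fun s => Real.sin (θ s)) t = Real.cos (θ t) * deriv θ t :=
    ((Real.hasDerivAt_sin (θ t)).comp t hθd).deriv
  have d4 : deriv (fun s => Real.sin (ω*s + θ₀)) t = Real.cos (ω*t + θ₀) * ω :=
    (hd_lin ω θ₀ t).sin.deriv
  rw [d1, d2] at e1
  rw [d3, d4] at e2
  rw [← hs t ht] at e1
  rw [← hc t ht] at e2
  have hp := Real.sin_sq_add_cos_sq (θ t)
  linear_combination (-Real.sin (θ t)) * e1 + Real.cos (θ t) * e2 + (ω - deriv θ t) * hp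

/-- A smooth horizontal curve parametrized by arc length in the Heisenberg group is
a geodesic (i.e. a left translation of one of the explicit unit-speed geodesics from
the origin) if and only if its characteristic deviation h_ζ = θ̇ is constant. -/
theorem geodesic_iff_char_dev_constant (T : ℝ) (hT : 0 < T) (θ x y z : ℝ → ℝ)
    (hθ : ContDiff ℝ (⊤ : ℕ∞) θ) (hxs : ContDiff ℝ (⊤ : ℕ∞) x) (hys : ContDiff ℝ (⊤ : ℕ∞) y)
    (hzs : ContDiff ℝ (⊤ : ℕ∞) z)
    (hx' : ∀ t ∈ Set.Ioo (-T) T, deriv x t = Real.cos (θ t))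
    (hy' : ∀ t ∈ Set.Ioo (-T) T, deriv y t = Real.sin (θ t))
    (hz' : ∀ t ∈ Set.Ioo (-T) T,
      deriv z t = (x t * deriv y t - y t * deriv x t) / 2) :
    (∃ u : ℝ × ℝ × ℝ, ∃ ω θ₀ : ℝ, ∀ t ∈ Set.Ioo (-T) T,
        (x t, y t, z t) = Hmul u (geo ω θ₀ t)) ↔
      (∃ c : ℝ, ∀ t ∈ Set.Ioo (-T) T, deriv θ t = c) := by
  have h0m : (0:ℝ) ∈ Set.Ioo (-T) T := ⟨by linarith, hT⟩
  constructor
  · rintro ⟨u, ω, θ₀, h⟩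
    refine ⟨ω, ?_⟩
    have hx1 : ∀ s ∈ Set.Ioo (-T) T, x s = u.1 + (geo ω θ₀ s).1 := by
      intro s hs
      have := congrArg Prod.fst (h s hs); simpa [Hmul] using this
    have hy1 : ∀ s ∈ Set.Ioo (-T) T, y s = u.2.1 + (geo ω θ₀ s).2.1 := by
      intro s hs
      have := congrArg (fun p => p.2.1) (h s hs); simpa [Hmul] using this
    have hcos : ∀ s ∈ Set.Ioo (-T) T, Real.cos (θ s) = Real.cos (ω*s + θ₀) := by
      intro s hs
      have hmem := isOpen_Ioo.mem_nhds hs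
      have hev : x =ᶠ[𝓝 s] fun r => u.1 + (geo ω θ₀ r).1 :=
        eventuallyEq_of_mem hmem hx1
      have := hev.deriv_eq
      rw [hx' s hs] at this
      rw [this, ((hd_geo1 ω θ₀ s).const_add u.1).deriv]
    have hsin : ∀ s ∈ Set.Ioo (-T) T, Real.sin (θ s) = Real.sin (ω*s + θ₀) := by
      intro s hs
      have hmem := isOpen_Ioo.mem_nhds hs
      have hev : y =ᶠ[𝓝 s] fun r => u.2.1 + (geo ω θ₀ r).2.1 :=
        eventuallyEq_of_mem hmem hy1
      have := hev.deriv_eq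
      rw [hy' s hs] at this
      rw [this, ((hd_geo2 ω θ₀ s).const_add u.2.1).deriv]
    exact theta_deriv hθ hcos hsin
  · rintro ⟨c, hc⟩
    set θ₀ := θ 0 with hθ₀
    refine ⟨(x 0, y 0, z 0), c, θ₀, ?_⟩
    have hθdiff : Differentiable ℝ θ := hθ.differentiable (by simp)
    have hxdiff : Differentiable ℝ x := hxs.differentiable (by simp)
    have hydiff : Differentiable ℝ y := hys.differentiable (by simp)
    have hzdiff : Differentiable ℝ z := hzs.differentiable (by simp)
    -- θ t = c t + θ₀ on Ioo
    have hθeq : ∀ t ∈ Set.Ioo (-T) T, θ t = c*t + θ₀ := by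
      apply aux_eqOn hT hθdiff (by fun_prop)
      · intro t ht
        rw [hc t ht, (hd_lin c θ₀ t).deriv]
      · simp [hθ₀]
    have hg1diff : Differentiable ℝ (fun t => (geo c θ₀ t).1) :=
      fun t => (hd_geo1 c θ₀ t).differentiableAt
    have hg2diff : Differentiable ℝ (fun t => (geo c θ₀ t).2.1) :=
      fun t => (hd_geo2 c θ₀ t).differentiableAt
    have hg3diff : Differentiable ℝ (fun t => (geo c θ₀ t).2.2) :=
      fun t => (hd_geo3 c θ₀ t).differentiableAt
    have hxeq : ∀ t ∈ Set.Ioo (-T) T, x t = x 0 + (geo c θ₀ t).1 := by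
      apply aux_eqOn hT hxdiff (by fun_prop)
      · intro t ht
        rw [hx' t ht, hθeq t ht, ((hd_geo1 c θ₀ t).const_add (x 0)).deriv]
      · simp [geo_zero]
    have hyeq : ∀ t ∈ Set.Ioo (-T) T, y t = y 0 + (geo c θ₀ t).2.1 := by
      apply aux_eqOn hT hydiff (by fun_prop)
      · intro t ht
        rw [hy' t ht, hθeq t ht, ((hd_geo2 c θ₀ t).const_add (y 0)).deriv]
      · simp [geo_zero]
    have hzeq : ∀ t ∈ Set.Ioo (-T) T,
        z t = z 0 + (geo c θ₀ t).2.2 + (x 0 * (geo c θ₀ t).2.1 - y 0 * (geo c θ₀ t).1) / 2 := by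
      apply aux_eqOn hT hzdiff (by fun_prop)
      · intro t ht
        have hG : HasDerivAt (fun t => z 0 + (geo c θ₀ t).2.2 +
            (x 0 * (geo c θ₀ t).2.1 - y 0 * (geo c θ₀ t).1) / 2)
            ((((geo c θ₀ t).1 * Real.sin (c*t + θ₀) - (geo c θ₀ t).2.1 * Real.cos (c*t + θ₀)) / 2) +
              (x 0 * Real.sin (c*t + θ₀) - y 0 * Real.cos (c*t + θ₀)) / 2) t := by
          exact (((hd_geo3 c θ₀ t).const_add (z 0)).add
            ((((hd_geo2 c θ₀ t).const_mul (x 0)).sub ((hd_geo1 c θ₀ t).const_mul (y 0))).div_const 2))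
        rw [hz' t ht, hG.deriv, hx' t ht, hy' t ht, hθeq t ht, hxeq t ht, hyeq t ht]
        ring
      · simp [geo_zero]
    intro t ht
    have hx2 := hxeq t ht
    have hy2 := hyeq t ht
    have hz2 := hzeq t ht
    simp only [Hmul, Prod.mk.injEq]
    exact ⟨hx2, hy2, hz2⟩
end
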